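/- arXiv:2601.19145 — 8 statements merged into one kernel-verified Lean document; each statement's English description precedes it below -/
import Mathlib

section
/- Let T > 0 and let f : [0,∞) → [0,∞] be Borel measurable with ∫_0^T f(s) ds < ∞. Then the following three quantities in [0,∞] are equal: (i) limsup_{t→∞} (1/t) ∫_0^t f(s) ds; (ii) limsup_{n→∞} (1/T) ∫_0^T (1/(nT)) ∫_0^{r+nT} f(s) ds dr; (iii) limsup_{t→∞} (1/t) ∫_0^t ( (1/T) ∫_0^T f(r+s) dr ) ds. -/
/-!
Write `F t = ∫₀ᵗ f`, a monotone function. The inner averages in (ii) lie between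
`F (nT) / (nT)` and `F ((n+1)T) / (nT)`; since `F` is monotone and `(n+1)T / (nT) → 1`, both
bounds have the limsup of `F t / t`. In (iii), Tonelli and translation invariance turn the
numerator into the average over `r ∈ [0,T]` of `∫ᵣ^{r+t} f`, which lies between `F t - F T` and
`F (t+T)`: the finite error `F T` vanishes after division by `t`, and the shift by `T` does not
change the limsup.
-/

open MeasureTheory Filter Set Topology
open scoped ENNReal

theorem ENNReal.limsup_mul_of_tendsto_one {ι : Type*} {l : Filter ι} [NeBot l] {u : ι → ℝ≥0∞}
    (hu : Tendsto u l (𝓝 1)) (v : ι → ℝ≥0∞) :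
    limsup (fun x => u x * v x) l = limsup v l := by
  have hsup : limsup u l = 1 := hu.limsup_eq
  have hinf : liminf u l = 1 := hu.liminf_eq
  apply le_antisymm
  · calc limsup (u * v) l ≤ limsup u l * limsup v l :=
          ENNReal.limsup_mul_le' (by simp [hsup]) (by simp [hsup])
      _ = limsup v l := by rw [hsup, one_mul]
  · calc limsup v l = limsup v l * liminf u l := by rw [hinf, mul_one]
      _ ≤ limsup (v * u) l := ENNReal.le_limsup_mul
      _ = limsup (fun x => u x * v x) l := by simp only [Pi.mul_def, mul_comm]

theorem limsup_div_ofReal_add_const {ι : Type*} {l : Filter ι} [NeBot l] {a : ι → ℝ}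
    (ha : Tendsto a l atTop) (c : ℝ) (G : ι → ℝ≥0∞) :
    limsup (fun x => G x / ENNReal.ofReal (a x + c)) l
      = limsup (fun x => G x / ENNReal.ofReal (a x)) l := by
  have hratio : Tendsto (fun x => ENNReal.ofReal ((a x + c) / a x)) l (𝓝 1) := by
    have : Tendsto (fun x => 1 + c / a x) l (𝓝 (1 + 0)) :=
      tendsto_const_nhds.add (tendsto_const_nhds.div_atTop ha)
    rw [add_zero] at this
    refine ENNReal.ofReal_one ▸ ENNReal.tendsto_ofReal (this.congr' ?_)
    filter_upwards [ha.eventually_gt_atTop 0] with x hx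
    rw [add_div, div_self hx.ne']
  rw [← ENNReal.limsup_mul_of_tendsto_one hratio]
  refine limsup_congr ?_
  filter_upwards [ha.eventually_gt_atTop 0, ha.eventually_gt_atTop (-c)] with x hx hxc
  have hpos : ENNReal.ofReal (a x + c) ≠ 0 := by simpa using neg_lt_iff_pos_add.mp hxc
  rw [ENNReal.ofReal_div_of_pos hx, div_eq_mul_inv, div_eq_mul_inv, div_eq_mul_inv, mul_comm,
    mul_assoc, ← mul_assoc _ (ENNReal.ofReal (a x + c)), ENNReal.inv_mul_cancel hpos
    ENNReal.ofReal_ne_top, one_mul]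

section Ratio

variable {T : ℝ}

theorem limsup_nat_mul_div_le (hT : 0 < T) (F : ℝ → ℝ≥0∞) :
    limsup (fun n : ℕ => F (n * T) / ENNReal.ofReal (n * T)) atTop
      ≤ limsup (fun t => F t / ENNReal.ofReal t) atTop :=
  (tendsto_natCast_atTop_atTop.atTop_mul_const hT).limsup_comp_le_limsup
    (u := fun t => F t / ENNReal.ofReal t)

theorem limsup_nat_succ_mul_div_eq (hT : 0 < T) (F : ℝ → ℝ≥0∞) :
    limsup (fun n : ℕ => F ((n + 1) * T) / ENNReal.ofReal (n * T)) atTop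
      = limsup (fun n : ℕ => F (n * T) / ENNReal.ofReal (n * T)) atTop := by
  calc limsup (fun n : ℕ => F ((n + 1) * T) / ENNReal.ofReal (n * T)) atTop
      = limsup (fun n : ℕ => F ((n + 1) * T) / ENNReal.ofReal (n * T + T)) atTop :=
        (limsup_div_ofReal_add_const (tendsto_natCast_atTop_atTop.atTop_mul_const hT) T _).symm
    _ = limsup (fun n : ℕ => F (↑(n + 1) * T) / ENNReal.ofReal (↑(n + 1) * T)) atTop := by
        simp only [Nat.cast_add, Nat.cast_one, add_mul, one_mul]
    _ = limsup (fun n : ℕ => F (n * T) / ENNReal.ofReal (n * T)) atTop :=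
        limsup_nat_add (fun n : ℕ => F (n * T) / ENNReal.ofReal (n * T)) 1

theorem limsup_div_le_limsup_nat_succ_mul_div {F : ℝ → ℝ≥0∞} (hF : Monotone F) (hT : 0 < T) :
    limsup (fun t => F t / ENNReal.ofReal t) atTop
      ≤ limsup (fun n : ℕ => F ((n + 1) * T) / ENNReal.ofReal (n * T)) atTop := by
  have hfloor : Tendsto (fun t : ℝ => ⌊t / T⌋₊) atTop atTop :=
    tendsto_nat_floor_atTop.comp (tendsto_id.atTop_div_const hT)
  refine (limsup_le_limsup ?_).trans (hfloor.limsup_comp_le_limsup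
    (u := fun n : ℕ => F ((n + 1) * T) / ENNReal.ofReal (n * T)))
  filter_upwards [eventually_ge_atTop 0] with t ht
  have hle : (⌊t / T⌋₊ : ℝ) * T ≤ t := (le_div_iff₀ hT).1 (Nat.floor_le (div_nonneg ht hT.le))
  have hge : t ≤ (⌊t / T⌋₊ + 1 : ℝ) * T := (div_le_iff₀ hT).1 (Nat.lt_floor_add_one _).le
  exact ENNReal.div_le_div (hF hge) (ENNReal.ofReal_le_ofReal hle)

theorem limsup_nat_mul_div_eq {F : ℝ → ℝ≥0∞} (hF : Monotone F) (hT : 0 < T) :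
    limsup (fun n : ℕ => F (n * T) / ENNReal.ofReal (n * T)) atTop
      = limsup (fun t => F t / ENNReal.ofReal t) atTop :=
  le_antisymm (limsup_nat_mul_div_le hT F)
    ((limsup_div_le_limsup_nat_succ_mul_div hF hT).trans (limsup_nat_succ_mul_div_eq hT F).le)

theorem limsup_eq_of_le_of_le_nat_succ_mul_div {F : ℝ → ℝ≥0∞} (hF : Monotone F) (hT : 0 < T)
    {G : ℕ → ℝ≥0∞}
    (hlo : ∀ᶠ n : ℕ in atTop, F (n * T) / ENNReal.ofReal (n * T) ≤ G n)
    (hhi : ∀ᶠ n : ℕ in atTop, G n ≤ F ((n + 1) * T) / ENNReal.ofReal (n * T)) :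
    limsup G atTop = limsup (fun t => F t / ENNReal.ofReal t) atTop := by
  refine le_antisymm ((limsup_le_limsup hhi).trans ?_) ?_
  · rw [limsup_nat_succ_mul_div_eq hT, limsup_nat_mul_div_eq hF hT]
  · rw [← limsup_nat_mul_div_eq hF hT]
    exact limsup_le_limsup hlo

end Ratio

theorem limsup_eq_of_sub_le_of_le_add (F : ℝ → ℝ≥0∞) (T : ℝ) {G : ℝ → ℝ≥0∞} {C : ℝ≥0∞} (hC : C ≠ ∞)
    (hlo : ∀ᶠ t : ℝ in atTop, F t - C ≤ G t) (hhi : ∀ᶠ t : ℝ in atTop, G t ≤ F (t + T)) :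
    limsup (fun t => G t / ENNReal.ofReal t) atTop
      = limsup (fun t => F t / ENNReal.ofReal t) atTop := by
  refine le_antisymm ?_ ?_
  · calc limsup (fun t => G t / ENNReal.ofReal t) atTop
        ≤ limsup (fun t => F (t + T) / ENNReal.ofReal t) atTop :=
          limsup_le_limsup (hhi.mono fun t ht => ENNReal.div_le_div_right ht _)
      _ = limsup (fun t => F (t + T) / ENNReal.ofReal (t + T)) atTop :=
          (limsup_div_ofReal_add_const tendsto_id T _).symm
      _ ≤ limsup (fun t => F t / ENNReal.ofReal t) atTop :=
          (tendsto_atTop_add_const_right atTop T tendsto_id).limsup_comp_le_limsup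
            (u := fun t => F t / ENNReal.ofReal t)
  · have hC0 : Tendsto (fun t => C / ENNReal.ofReal t) atTop (𝓝 0) := by
      simpa [div_eq_mul_inv] using
        ENNReal.Tendsto.const_mul (tendsto_inv_iff.2 ENNReal.tendsto_ofReal_atTop)
          (Or.inr hC)
    calc limsup (fun t => F t / ENNReal.ofReal t) atTop
        ≤ limsup (fun t => G t / ENNReal.ofReal t + C / ENNReal.ofReal t) atTop := by
          refine limsup_le_limsup (hlo.mono fun t ht => ?_)
          dsimp only
          rw [ENNReal.div_add_div_same]
          exact ENNReal.div_le_div_right (tsub_le_iff_right.1 ht) _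
      _ = limsup (fun t => G t / ENNReal.ofReal t) atTop :=
          ENNReal.limsup_add_of_right_tendsto_zero hC0 _

section Average

variable {α : Type*} [MeasurableSpace α] {μ : Measure α} {s : Set α} {g : α → ℝ≥0∞} {c : ℝ≥0∞}

theorem le_setLAverage_of_forall_le (hs : MeasurableSet s) (h0 : μ s ≠ 0) (htop : μ s ≠ ∞)
    (h : ∀ x ∈ s, c ≤ g x) : c ≤ ⨍⁻ x in s, g x ∂μ :=
  calc c = ⨍⁻ _ in s, c ∂μ := (setLAverage_const h0 htop c).symm
    _ ≤ ⨍⁻ x in s, g x ∂μ := laverage_mono_ae ((ae_restrict_iff' hs).2 (ae_of_all _ h))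

theorem setLAverage_le_of_forall_le (hs : MeasurableSet s) (h0 : μ s ≠ 0) (htop : μ s ≠ ∞)
    (h : ∀ x ∈ s, g x ≤ c) : ⨍⁻ x in s, g x ∂μ ≤ c :=
  calc ⨍⁻ x in s, g x ∂μ ≤ ⨍⁻ _ in s, c ∂μ :=
        laverage_mono_ae ((ae_restrict_iff' hs).2 (ae_of_all _ h))
    _ = c := setLAverage_const h0 htop c

end Average

theorem setLAverage_Icc_zero (g : ℝ → ℝ≥0∞) (T : ℝ) :
    ⨍⁻ r in Icc 0 T, g r ∂volume = (∫⁻ r in Icc 0 T, g r) / ENNReal.ofReal T := by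
  rw [setLAverage_eq, Real.volume_Icc, sub_zero]

section Translate

variable {f : ℝ → ℝ≥0∞}

theorem lintegral_Icc_lintegral_Icc_add (hf : Measurable f) (t T : ℝ) :
    ∫⁻ s in Icc 0 t, ∫⁻ r in Icc 0 T, f (r + s)
      = ∫⁻ r in Icc 0 T, ∫⁻ x in Icc r (r + t), f x := by
  rw [lintegral_lintegral_swap (by fun_prop)]
  refine lintegral_congr fun r => ?_
  have hpre : (fun s => r + s) ⁻¹' Icc r (r + t) = Icc 0 t := by
    simp [preimage_const_add_Icc]
  rw [← hpre, (measurePreserving_add_left volume r).setLIntegral_comp_preimage_emb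
    (measurableEmbedding_addLeft r)]

theorem lintegral_Icc_average_shift (hf : Measurable f) (t : ℝ) {T : ℝ} (hT : 0 < T) :
    ∫⁻ s in Icc 0 t, (∫⁻ r in Icc 0 T, f (r + s)) / ENNReal.ofReal T
      = ⨍⁻ r in Icc 0 T, (∫⁻ x in Icc r (r + t), f x) ∂volume := by
  simp_rw [setLAverage_Icc_zero, div_eq_mul_inv]
  rw [lintegral_mul_const' _ _ (ENNReal.inv_ne_top.2 (ENNReal.ofReal_pos.2 hT).ne'),
    lintegral_Icc_lintegral_Icc_add hf]

theorem lintegral_Icc_shift_le {r t T : ℝ} (hr : r ∈ Icc 0 T) :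
    ∫⁻ x in Icc r (r + t), f x ≤ ∫⁻ x in Icc 0 (t + T), f x :=
  lintegral_mono_set (Icc_subset_Icc hr.1 (by linarith [hr.2]))

theorem lintegral_Icc_sub_le_lintegral_Icc_shift {r t T : ℝ} (hr : r ∈ Icc 0 T) :
    (∫⁻ x in Icc 0 t, f x) - ∫⁻ x in Icc 0 T, f x ≤ ∫⁻ x in Icc r (r + t), f x := by
  rw [tsub_le_iff_left]
  calc ∫⁻ x in Icc 0 t, f x ≤ ∫⁻ x in Icc 0 T ∪ Icc r (r + t), f x := by
        refine lintegral_mono_set fun x hx => ?_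
        by_cases hxT : x ≤ T
        · exact Or.inl ⟨hx.1, hxT⟩
        · exact Or.inr ⟨by linarith [hr.2], by linarith [hx.2, hr.1]⟩
    _ ≤ (∫⁻ x in Icc 0 T, f x) + ∫⁻ x in Icc r (r + t), f x := lintegral_union_le _ _ _

end Translate

/-- For `T > 0` and Borel measurable `f : [0,∞) → [0,∞]` with
`∫_0^T f < ∞`, the three limsups (as elements of `[0,∞]`) agree:
(i) `limsup_{t→∞} (1/t) ∫_0^t f`,
(ii) `limsup_{n→∞} (1/T) ∫_0^T (1/(nT)) ∫_0^{r+nT} f dr`,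
(iii) `limsup_{t→∞} (1/t) ∫_0^t ((1/T) ∫_0^T f(r+s) dr) ds`. -/
theorem stmt_0 (T : ℝ) (hT : 0 < T) (f : ℝ → ENNReal) (hf : Measurable f)
    (hint : ∫⁻ s in Set.Icc (0 : ℝ) T, f s < ⊤) :
    limsup (fun t : ℝ => (∫⁻ s in Set.Icc (0 : ℝ) t, f s) / ENNReal.ofReal t) atTop
        = limsup (fun n : ℕ =>
            (∫⁻ r in Set.Icc (0 : ℝ) T,
              (∫⁻ s in Set.Icc (0 : ℝ) (r + n * T), f s) / ENNReal.ofReal (n * T)) /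
              ENNReal.ofReal T) atTop
      ∧
      limsup (fun t : ℝ => (∫⁻ s in Set.Icc (0 : ℝ) t, f s) / ENNReal.ofReal t) atTop
        = limsup (fun t : ℝ =>
            (∫⁻ s in Set.Icc (0 : ℝ) t,
              (∫⁻ r in Set.Icc (0 : ℝ) T, f (r + s)) / ENNReal.ofReal T) /
              ENNReal.ofReal t) atTop := by
  set F : ℝ → ℝ≥0∞ := fun t => ∫⁻ s in Icc 0 t, f s
  have hF : Monotone F := fun a b hab => lintegral_mono_set (Icc_subset_Icc_right hab)
  have hvol0 : volume (Icc 0 T) ≠ 0 := by simp [hT]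
  have hvol : volume (Icc 0 T) ≠ ∞ := by simp
  constructor
  · refine (limsup_eq_of_le_of_le_nat_succ_mul_div hF hT (.of_forall fun n => ?_)
      (.of_forall fun n => ?_)).symm <;> rw [← setLAverage_Icc_zero _ T]
    · refine le_setLAverage_of_forall_le measurableSet_Icc hvol0 hvol fun r hr => ?_
      exact ENNReal.div_le_div_right (hF (by linarith [hr.1])) _
    · refine setLAverage_le_of_forall_le measurableSet_Icc hvol0 hvol fun r hr => ?_
      exact ENNReal.div_le_div_right (hF (by linarith [hr.2])) _
  · refine (limsup_eq_of_sub_le_of_le_add F T hint.ne (.of_forall fun t => ?_)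
      (.of_forall fun t => ?_)).symm <;> rw [lintegral_Icc_average_shift hf t hT]
    · exact le_setLAverage_of_forall_le measurableSet_Icc hvol0 hvol fun r hr =>
        lintegral_Icc_sub_le_lintegral_Icc_shift hr
    · exact setLAverage_le_of_forall_le measurableSet_Icc hvol0 hvol fun r hr =>
        lintegral_Icc_shift_le hr
end

section
/- Let T > 0, ε > 0, K > 0 and let f : [0,∞) → [0,∞] be Borel measurable with ∫_0^T f(s) ds < ∞ and limsup_{t→∞} (1/t) ∫_0^t f(s) ds ≤ K. Then, setting M = KT/ε, one has limsup_{t→∞} (1/t) · λ({ s ∈ [0,t] : ∫_s^{s+T} f(r) dr > M }) ≤ ε, where λ denotes Lebesgue measure on [0,∞). -/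
open MeasureTheory Filter Set

/-- Let `T, ε, K > 0` and `f : [0,∞) → [0,∞]` Borel measurable with
`∫_0^T f < ∞` and `limsup_{t→∞} (1/t) ∫_0^t f ≤ K`.  Then with `M = K T / ε`,
`limsup_{t→∞} (1/t)·λ({s ∈ [0,t] : ∫_s^{s+T} f > M}) ≤ ε`. -/
theorem stmt_1 (T ε K : ℝ) (hT : 0 < T) (hε : 0 < ε) (hK : 0 < K)
    (f : ℝ → ENNReal) (hf : Measurable f)
    (hint : ∫⁻ s in Set.Icc (0 : ℝ) T, f s < ⊤)
    (hlimsup :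
      limsup (fun t : ℝ => (∫⁻ s in Set.Icc (0 : ℝ) t, f s) / ENNReal.ofReal t) atTop
        ≤ ENNReal.ofReal K) :
    limsup (fun t : ℝ =>
        volume {s : ℝ | s ∈ Set.Icc (0 : ℝ) t ∧
            ENNReal.ofReal (K * T / ε) < ∫⁻ u in Set.Icc s (s + T), f u} /
          ENNReal.ofReal t) atTop
      ≤ ENNReal.ofReal ε := by
  set M : ℝ := K * T / ε with hMdef
  have hMpos : 0 < M := by positivity
  set g : ℝ → ENNReal := fun s => ∫⁻ u in Icc s (s + T), f u with hgdef
  -- measurability of g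
  have hS : MeasurableSet {p : ℝ × ℝ | p.1 ≤ p.2 ∧ p.2 ≤ p.1 + T} :=
    (measurableSet_le measurable_fst measurable_snd).inter
      (measurableSet_le measurable_snd (measurable_fst.add_const T))
  have hgm : Measurable g := by
    have h1 : Measurable (Function.uncurry fun s u : ℝ =>
        Set.indicator {p : ℝ × ℝ | p.1 ≤ p.2 ∧ p.2 ≤ p.1 + T} (fun p => f p.2) (s, u)) :=
      Measurable.indicator (hf.comp measurable_snd) hS
    have h2 := h1.lintegral_prod_right (ν := volume)
    have heq : g = fun s : ℝ => ∫⁻ u, Set.indicator {p : ℝ × ℝ | p.1 ≤ p.2 ∧ p.2 ≤ p.1 + T}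
        (fun p => f p.2) (s, u) := by
      funext s
      show (∫⁻ u in Icc s (s + T), f u) = _
      rw [← lintegral_indicator measurableSet_Icc]
      congr 1
    rw [heq]
    exact h2
  -- Fubini bound
  have fubini : ∀ t : ℝ, ∫⁻ s in Icc (0:ℝ) t, g s ≤
      ENNReal.ofReal T * ∫⁻ u in Icc (0:ℝ) (t + T), f u := by
    intro t
    set H : ℝ → ℝ → ENNReal := fun s u =>
      Set.indicator {p : ℝ × ℝ | 0 ≤ p.1 ∧ p.1 ≤ t ∧ p.1 ≤ p.2 ∧ p.2 ≤ p.1 + T}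
        (fun p => f p.2) (s, u) with hHdef
    have hHm : Measurable (Function.uncurry H) := by
      refine Measurable.indicator (hf.comp measurable_snd) ?_
      refine MeasurableSet.inter (measurableSet_le measurable_const measurable_fst) ?_
      refine MeasurableSet.inter (measurableSet_le measurable_fst measurable_const) ?_
      exact (measurableSet_le measurable_fst measurable_snd).inter
        (measurableSet_le measurable_snd (measurable_fst.add_const T))
    have step1 : ∫⁻ s in Icc (0:ℝ) t, g s = ∫⁻ s, ∫⁻ u, H s u := by
      rw [← lintegral_indicator measurableSet_Icc]
      congr 1
      ext s
      by_cases hs : s ∈ Icc (0:ℝ) t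
      · rw [Set.indicator_of_mem hs]
        show (∫⁻ u in Icc s (s + T), f u) = _
        rw [← lintegral_indicator measurableSet_Icc]
        congr 1
        ext u
        simp only [hHdef, Set.indicator_apply, Set.mem_Icc, Set.mem_setOf_eq]
        obtain ⟨h1, h2⟩ := hs
        by_cases h : s ≤ u ∧ u ≤ s + T <;> simp [h, h1, h2]
      · rw [Set.indicator_of_notMem hs]
        have hz : ∀ u, H s u = 0 := by
          intro u
          simp only [hHdef, Set.indicator_apply, Set.mem_setOf_eq, Set.mem_Icc] at hs ⊢
          rw [if_neg]
          rintro ⟨h1, h2, -⟩; exact hs ⟨h1, h2⟩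
        simp only [hz, lintegral_zero]
    have step2 : ∫⁻ s, ∫⁻ u, H s u = ∫⁻ u, ∫⁻ s, H s u := lintegral_lintegral_swap hHm.aemeasurable
    have step3 : ∫⁻ u, ∫⁻ s, H s u ≤
        ∫⁻ u, Set.indicator (Icc (0:ℝ) (t + T)) (fun u => ENNReal.ofReal T * f u) u := by
      refine lintegral_mono fun u => ?_
      have hkey : ∀ s, H s u = Set.indicator {s : ℝ | 0 ≤ s ∧ s ≤ t ∧ s ≤ u ∧ u ≤ s + T}
          (fun _ => f u) s := by
        intro s; simp [hHdef, Set.indicator_apply, Set.mem_setOf_eq]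
      have hAm : MeasurableSet {s : ℝ | 0 ≤ s ∧ s ≤ t ∧ s ≤ u ∧ u ≤ s + T} := by
        refine MeasurableSet.inter (measurableSet_le measurable_const measurable_id) ?_
        refine MeasurableSet.inter (measurableSet_le measurable_id measurable_const) ?_
        exact (measurableSet_le measurable_id measurable_const).inter
          (measurableSet_le measurable_const (measurable_id.add_const T))
      calc ∫⁻ s, H s u = f u * volume {s : ℝ | 0 ≤ s ∧ s ≤ t ∧ s ≤ u ∧ u ≤ s + T} := by
            simp_rw [hkey]
            exact lintegral_indicator_const hAm (f u)
        _ ≤ _ := by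
            by_cases hu : u ∈ Icc (0:ℝ) (t + T)
            · rw [Set.indicator_of_mem hu]
              rw [mul_comm]
              refine mul_le_mul_left ?_ (f u)
              calc volume {s : ℝ | 0 ≤ s ∧ s ≤ t ∧ s ≤ u ∧ u ≤ s + T}
                  ≤ volume (Icc (u - T) u) := by
                    refine measure_mono fun s hs => ?_
                    obtain ⟨-, -, h3, h4⟩ := hs
                    exact ⟨by linarith, h3⟩
                _ = ENNReal.ofReal T := by rw [Real.volume_Icc]; ring_nf
            · rw [Set.indicator_of_notMem hu]
              have : {s : ℝ | 0 ≤ s ∧ s ≤ t ∧ s ≤ u ∧ u ≤ s + T} = ∅ := by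
                ext s
                simp only [Set.mem_setOf_eq, Set.mem_empty_iff_false, iff_false]
                rintro ⟨h1, h2, h3, h4⟩
                simp only [Set.mem_Icc, not_and_or, not_le] at hu
                rcases hu with hu | hu <;> linarith
              rw [this, measure_empty, mul_zero]
    calc ∫⁻ s in Icc (0:ℝ) t, g s = ∫⁻ u, ∫⁻ s, H s u := by rw [step1, step2]
      _ ≤ _ := step3
      _ = ∫⁻ u in Icc (0:ℝ) (t + T), ENNReal.ofReal T * f u :=
          lintegral_indicator measurableSet_Icc _
      _ = ENNReal.ofReal T * ∫⁻ u in Icc (0:ℝ) (t + T), f u := lintegral_const_mul _ hf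
  -- Chebyshev bound
  have cheby : ∀ t : ℝ, ENNReal.ofReal M *
      volume {s : ℝ | s ∈ Icc (0:ℝ) t ∧ ENNReal.ofReal M < g s} ≤
      ∫⁻ s in Icc (0:ℝ) t, g s := by
    intro t
    have hset : {s : ℝ | s ∈ Icc (0:ℝ) t ∧ ENNReal.ofReal M < g s}
        = {s : ℝ | ENNReal.ofReal M < g s} ∩ Icc (0:ℝ) t := by
      ext s; simp [and_comm]
    rw [hset, ← Measure.restrict_apply (measurableSet_lt measurable_const hgm)]
    calc ENNReal.ofReal M * (volume.restrict (Icc (0:ℝ) t)) {s | ENNReal.ofReal M < g s}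
        ≤ ENNReal.ofReal M * (volume.restrict (Icc (0:ℝ) t)) {s | ENNReal.ofReal M ≤ g s} := by
          refine mul_le_mul_right (measure_mono ?_) _
          intro s hs
          exact le_of_lt (Set.mem_setOf_eq ▸ hs)
      _ ≤ ∫⁻ s in Icc (0:ℝ) t, g s := mul_meas_ge_le_lintegral₀ hgm.aemeasurable _
  -- conclude
  apply ENNReal.le_of_forall_pos_le_add
  intro η hη _
  set δ : ℝ := (η : ℝ) with hδdef
  have hδpos : 0 < δ := hη
  set c : ℝ := (ε + δ) * K / ε with hcdef
  have hcpos : 0 < c := by positivity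
  have hcK : K < c := by
    rw [hcdef, lt_div_iff₀ hε]
    nlinarith
  have hev : ∀ᶠ u : ℝ in atTop,
      (∫⁻ s in Icc (0:ℝ) u, f s) / ENNReal.ofReal u < ENNReal.ofReal c :=
    eventually_lt_of_limsup_lt
      (lt_of_le_of_lt hlimsup ((ENNReal.ofReal_lt_ofReal_iff hcpos).mpr hcK))
  have hev1 : ∀ᶠ u : ℝ in atTop, (∫⁻ s in Icc (0:ℝ) u, f s) ≤ ENNReal.ofReal (c * u) := by
    filter_upwards [hev, eventually_gt_atTop (0:ℝ)] with u h1 h2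
    have hne : ENNReal.ofReal u ≠ 0 := by
      simp [ENNReal.ofReal_eq_zero, not_le, h2]
    have htop : ENNReal.ofReal u ≠ ⊤ := ENNReal.ofReal_ne_top
    calc (∫⁻ s in Icc (0:ℝ) u, f s)
        = (∫⁻ s in Icc (0:ℝ) u, f s) / ENNReal.ofReal u * ENNReal.ofReal u :=
          (ENNReal.div_mul_cancel hne htop).symm
      _ ≤ ENNReal.ofReal c * ENNReal.ofReal u := mul_le_mul_left h1.le _
      _ = ENNReal.ofReal (c * u) := (ENNReal.ofReal_mul hcpos.le).symm
  have hev2 : ∀ᶠ t : ℝ in atTop, (∫⁻ s in Icc (0:ℝ) (t + T), f s)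
      ≤ ENNReal.ofReal (c * (t + T)) :=
    (tendsto_atTop_add_const_right atTop T tendsto_id).eventually hev1
  have hev3 : ∀ᶠ t : ℝ in atTop,
      volume {s : ℝ | s ∈ Icc (0:ℝ) t ∧ ENNReal.ofReal M < g s}
        ≤ ENNReal.ofReal (T * c * (t + T) / M) := by
    filter_upwards [hev2] with t h1
    have hMne : ENNReal.ofReal M ≠ 0 := by
      simp [ENNReal.ofReal_eq_zero, not_le, hMpos]
    have key : ENNReal.ofReal M *
        volume {s : ℝ | s ∈ Icc (0:ℝ) t ∧ ENNReal.ofReal M < g s}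
        ≤ ENNReal.ofReal M * ENNReal.ofReal (T * c * (t + T) / M) := by
      calc ENNReal.ofReal M * volume {s : ℝ | s ∈ Icc (0:ℝ) t ∧ ENNReal.ofReal M < g s}
          ≤ ∫⁻ s in Icc (0:ℝ) t, g s := cheby t
        _ ≤ ENNReal.ofReal T * ∫⁻ u in Icc (0:ℝ) (t + T), f u := fubini t
        _ ≤ ENNReal.ofReal T * ENNReal.ofReal (c * (t + T)) := mul_le_mul_right h1 _
        _ = ENNReal.ofReal M * ENNReal.ofReal (T * c * (t + T) / M) := by
            rw [← ENNReal.ofReal_mul hT.le, ← ENNReal.ofReal_mul hMpos.le]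
            congr 1
            field_simp
    exact (ENNReal.mul_le_mul_iff_right hMne ENNReal.ofReal_ne_top).mp key
  have hev4 : ∀ᶠ t : ℝ in atTop,
      volume {s : ℝ | s ∈ Icc (0:ℝ) t ∧ ENNReal.ofReal M < g s} / ENNReal.ofReal t
        ≤ ENNReal.ofReal ((T * c / M) * ((t + T) / t)) := by
    filter_upwards [hev3, eventually_gt_atTop (0:ℝ)] with t h1 h2
    calc volume {s : ℝ | s ∈ Icc (0:ℝ) t ∧ ENNReal.ofReal M < g s} / ENNReal.ofReal t
        ≤ ENNReal.ofReal (T * c * (t + T) / M) / ENNReal.ofReal t :=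
          ENNReal.div_le_div_right h1 _
      _ = ENNReal.ofReal (T * c * (t + T) / M / t) := (ENNReal.ofReal_div_of_pos h2).symm
      _ = ENNReal.ofReal ((T * c / M) * ((t + T) / t)) := by
          congr 1
          field_simp
  have hlim : Tendsto (fun t : ℝ => ENNReal.ofReal ((T * c / M) * ((t + T) / t))) atTop
      (nhds (ENNReal.ofReal (T * c / M))) := by
    have h0 : Tendsto (fun t : ℝ => (t + T) / t) atTop (nhds 1) := by
      have h1 : Tendsto (fun t : ℝ => 1 + T * t⁻¹) atTop (nhds (1 + T * 0)) :=
        tendsto_const_nhds.add (tendsto_inv_atTop_zero.const_mul T)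
      rw [mul_zero, add_zero] at h1
      refine h1.congr' ?_
      filter_upwards [eventually_gt_atTop (0:ℝ)] with t ht
      field_simp
    have h2 : Tendsto (fun t : ℝ => (T * c / M) * ((t + T) / t)) atTop
        (nhds ((T * c / M) * 1)) := h0.const_mul _
    rw [mul_one] at h2
    exact (ENNReal.continuous_ofReal.tendsto _).comp h2
  calc limsup (fun t : ℝ =>
        volume {s : ℝ | s ∈ Icc (0:ℝ) t ∧ ENNReal.ofReal M < g s} / ENNReal.ofReal t) atTop
      ≤ limsup (fun t : ℝ => ENNReal.ofReal ((T * c / M) * ((t + T) / t))) atTop :=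
        limsup_le_limsup hev4
    _ = ENNReal.ofReal (T * c / M) := hlim.limsup_eq
    _ = ENNReal.ofReal ε + ↑η := by
        have : T * c / M = ε + δ := by
          rw [hcdef, hMdef]
          field_simp
        rw [this, ENNReal.ofReal_add hε.le hδpos.le, hδdef, ENNReal.ofReal_coe_nnreal]
end

section
/- For all real numbers T, α, β, γ, K, C > 0 with γ < β/α there exists a function A : [0,∞) → [0,1] with lim_{M→∞} A(M) = 0 and with the following property: for every n ≥ 1 and every ℝⁿ-valued stochastic process (X_t)_{t∈[0,T]} on a probability space satisfying E[|X_ت − X_s|^α] ≤ K·|t−s|^{1+β} for all s, t ∈ [0,T] (with the Euclidean norm |·| on ℝⁿ) and E[ sup_{t∈[0,T]∩D} |X_t| ] ≤ C, where D denotes the set of dyadic rational numbers, there exists a modification (X̃_t)_{t∈[0,T]} of X (i.e. P(X̃_t = X_t) = 1 for every t ∈ [0,T]) whose sample paths are almost surely γ-Hölder continuous, and such that P( ‖X̃‖_γ > M ) ≤ A(M) for every M ≥ 0, where ‖X̃‖_γ := |X̃_0| + sup_{0≤s<t≤T} |X̃_t − X̃_s| / (t−s)^γ. -/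
open MeasureTheory Filter

/-- The Euclidean norm on `ℝⁿ`. -/
noncomputable def eNorm {n : ℕ} (x : Fin n → ℝ) : ℝ := Real.sqrt (∑ i, x i ^ 2)

/-- The set of dyadic rational numbers. -/
def dyadics : Set ℝ := {t : ℝ | ∃ k : ℤ, ∃ j : ℕ, t = (k : ℝ) / 2 ^ j}

open Topology
open scoped ENNReal

/-!
Chaining along dyadic grids. Let `ξ j` be the largest increment of `X` between neighbouring
points of `2⁻ʲℤ ∩ [0, T]` and `Z = sup_j 2 ^ (j γ) ξ j`. Joining two dyadic points `u < v`
through their approximations at the level `m` with `2⁻ᵐ ≈ v - u` gives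
`|X v - X u| ≤ c Z (v - u) ^ γ`, so where `Z < ∞` the dyadic approximations of every `t`
converge, and their limit is the modification. Bounding the supremum by a sum,
`E[Z ^ α] ≤ ∑ j, 2 ^ (j γ α) E[ξ j ^ α] ≤ K T ∑ j, 2 ^ (j (γ α - β)) < ∞`, a bound that only
involves the constants; Markov's inequality for `|X 0|` and for `c Z` then gives the tail `A`.
-/

noncomputable section

def dyadicGrid (j k : ℕ) : ℝ := k / 2 ^ j

def dyadicFloor (m : ℕ) (t : ℝ) : ℝ := dyadicGrid m ⌊t * 2 ^ m⌋₊

lemma dyadicGrid_nonneg (j k : ℕ) : 0 ≤ dyadicGrid j k := by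
  unfold dyadicGrid; positivity

lemma dyadicGrid_mono (j : ℕ) : Monotone (dyadicGrid j) := fun _ _ h =>
  div_le_div_of_nonneg_right (Nat.cast_le.2 h) (by positivity)

lemma dyadicGrid_le_iff {j k : ℕ} {T : ℝ} : dyadicGrid j k ≤ T ↔ k ≤ T * 2 ^ j :=
  div_le_iff₀ (by positivity)

lemma dyadicGrid_le_of_le_floor {j k : ℕ} {T : ℝ} (hT : 0 ≤ T) (hk : k ≤ ⌊T * 2 ^ j⌋₊) :
    dyadicGrid j k ≤ T :=
  dyadicGrid_le_iff.2 ((Nat.le_floor_iff (by positivity)).1 hk)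

lemma dyadicGrid_sub_dyadicGrid {j a b : ℕ} (h : a ≤ b) :
    dyadicGrid j b - dyadicGrid j a = (b - a : ℕ) / 2 ^ j := by
  rw [dyadicGrid, dyadicGrid, Nat.cast_sub h, sub_div]

lemma dyadicGrid_mul_pow (j k p : ℕ) : dyadicGrid (j + p) (k * 2 ^ p) = dyadicGrid j k := by
  rw [dyadicGrid, dyadicGrid, pow_add]; push_cast; field_simp

lemma dyadicFloor_dyadicGrid {j k m : ℕ} (h : j ≤ m) :
    dyadicFloor m (dyadicGrid j k) = dyadicGrid j k := by
  obtain ⟨p, rfl⟩ := Nat.exists_eq_add_of_le h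
  have h : dyadicGrid j k * 2 ^ (j + p) = ((k * 2 ^ p : ℕ) : ℝ) := by
    rw [dyadicGrid, pow_add]; push_cast; field_simp
  rw [dyadicFloor, h, Nat.floor_natCast, dyadicGrid_mul_pow]

lemma dyadicFloor_nonneg (m : ℕ) (t : ℝ) : 0 ≤ dyadicFloor m t := dyadicGrid_nonneg _ _

lemma dyadicFloor_le {t : ℝ} (ht : 0 ≤ t) (m : ℕ) : dyadicFloor m t ≤ t :=
  dyadicGrid_le_iff.2 (Nat.floor_le (by positivity))

lemma lt_dyadicFloor_add (m : ℕ) (t : ℝ) : t < dyadicFloor m t + (2 ^ m)⁻¹ := by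
  rw [dyadicFloor, dyadicGrid, div_add' _ _ _ (by positivity), lt_div_iff₀ (by positivity)]
  simpa using Nat.lt_floor_add_one (t * 2 ^ m)

lemma tendsto_dyadicFloor {t : ℝ} (ht : 0 ≤ t) :
    Tendsto (fun m => dyadicFloor m t) atTop (𝓝 t) := by
  have h : Tendsto (fun m : ℕ => t - ((2 : ℝ) ^ m)⁻¹) atTop (𝓝 (t - 0)) :=
    tendsto_const_nhds.sub
      (tendsto_inv_atTop_zero.comp (tendsto_pow_atTop_atTop_of_one_lt one_lt_two))
  rw [sub_zero] at h
  exact tendsto_of_tendsto_of_tendsto_of_le_of_le h tendsto_const_nhds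
    (fun m => by linarith [lt_dyadicFloor_add m t]) (dyadicFloor_le ht)

lemma floor_mul_two_pow_succ (t : ℝ) (m : ℕ) :
    ⌊t * 2 ^ (m + 1)⌋₊ = 2 * ⌊t * 2 ^ m⌋₊ ∨ ⌊t * 2 ^ (m + 1)⌋₊ = 2 * ⌊t * 2 ^ m⌋₊ + 1 := by
  have h : ⌊t * 2 ^ m⌋₊ = ⌊t * 2 ^ (m + 1)⌋₊ / 2 := by
    rw [← Nat.floor_div_ofNat, pow_succ, mul_div_assoc, mul_div_cancel_right₀ _ two_ne_zero]
  omega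

lemma exists_pow_mul_inv_pow_le {γ h T : ℝ} (hγ : 0 < γ) (h0 : 0 < h) (hT : h ≤ T) :
    ∃ m : ℕ, (h * 2 ^ m + 3) * ((2 ^ γ)⁻¹) ^ m ≤ (T + 4) * 2 ^ γ * h ^ γ := by
  have h2γ : 1 ≤ (2 : ℝ) ^ γ := Real.one_le_rpow one_le_two hγ.le
  rcases le_or_gt h 1 with h1 | h1
  · obtain ⟨m, hm, hm'⟩ := exists_nat_pow_near (one_le_inv_iff₀.2 ⟨h0, h1⟩) one_lt_two
    refine ⟨m, ?_⟩
    have hhm : h * 2 ^ m ≤ 1 := by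
      simpa [h0.ne'] using mul_le_mul_of_nonneg_left hm h0.le
    have hpow : ((2 ^ γ)⁻¹) ^ m ≤ 2 ^ γ * h ^ γ := by
      rw [inv_pow, Real.rpow_pow_comm zero_le_two, ← Real.mul_rpow zero_le_two h0.le,
        ← Real.inv_rpow (by positivity)]
      refine Real.rpow_le_rpow (by positivity) ?_ hγ.le
      rw [inv_le_iff_one_le_mul₀ (by positivity)]
      rw [pow_succ, inv_lt_iff_one_lt_mul₀ h0] at hm'
      nlinarith
    calc (h * 2 ^ m + 3) * ((2 ^ γ)⁻¹) ^ m ≤ 4 * (2 ^ γ * h ^ γ) := by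
          gcongr; linarith
      _ ≤ (T + 4) * 2 ^ γ * h ^ γ := by
          have : 0 ≤ 2 ^ γ * h ^ γ := by positivity
          nlinarith
  · refine ⟨0, ?_⟩
    have : 1 ≤ h ^ γ := Real.one_le_rpow h1.le hγ.le
    have : 1 ≤ 2 ^ γ * h ^ γ := one_le_mul_of_one_le_of_one_le h2γ this
    simp only [pow_zero, mul_one]
    nlinarith

section Chaining

variable {Ω E : Type*} [PseudoEMetricSpace E] (T : ℝ) (Y : ℝ → Ω → E)

def maxDyadicIncrement (j : ℕ) (ω : Ω) : ℝ≥0∞ :=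
  ⨆ k ∈ Finset.range ⌊T * 2 ^ j⌋₊, edist (Y (dyadicGrid j k) ω) (Y (dyadicGrid j (k + 1)) ω)

def dyadicHolderConst (γ : ℝ) (ω : Ω) : ℝ≥0∞ :=
  ⨆ j : ℕ, ENNReal.ofReal (((2 : ℝ) ^ γ) ^ j) * maxDyadicIncrement T Y j ω

variable {T Y}

lemma edist_le_maxDyadicIncrement {j k : ℕ} (hk : k < ⌊T * 2 ^ j⌋₊) (ω : Ω) :
    edist (Y (dyadicGrid j k) ω) (Y (dyadicGrid j (k + 1)) ω) ≤ maxDyadicIncrement T Y j ω :=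
  le_iSup₂ (f := fun k (_ : k ∈ Finset.range ⌊T * 2 ^ j⌋₊) =>
    edist (Y (dyadicGrid j k) ω) (Y (dyadicGrid j (k + 1)) ω)) k (Finset.mem_range.2 hk)

lemma edist_dyadicGrid_le {j a b : ℕ} (hab : a ≤ b) (hb : b ≤ ⌊T * 2 ^ j⌋₊) (ω : Ω) :
    edist (Y (dyadicGrid j a) ω) (Y (dyadicGrid j b) ω) ≤
      (b - a : ℕ) * maxDyadicIncrement T Y j ω := by
  refine (edist_le_Ico_sum_edist (fun k => Y (dyadicGrid j k) ω) hab).trans ?_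
  rw [← Nat.card_Ico, ← nsmul_eq_mul]
  exact Finset.sum_le_card_nsmul _ _ _ fun k hk =>
    edist_le_maxDyadicIncrement (by simp at hk; omega) ω

lemma edist_dyadicFloor_succ_le {t : ℝ} (ht : t ≤ T) (m : ℕ) (ω : Ω) :
    edist (Y (dyadicFloor m t) ω) (Y (dyadicFloor (m + 1) t) ω) ≤
      maxDyadicIncrement T Y (m + 1) ω := by
  have hk : dyadicFloor m t = dyadicGrid (m + 1) (2 * ⌊t * 2 ^ m⌋₊) := by
    rw [dyadicFloor, ← dyadicGrid_mul_pow m _ 1, pow_one, mul_comm]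
  have hT : ⌊t * 2 ^ (m + 1)⌋₊ ≤ ⌊T * 2 ^ (m + 1)⌋₊ := Nat.floor_le_floor (by gcongr)
  rw [hk, dyadicFloor]
  rcases floor_mul_two_pow_succ t m with h | h <;> rw [h]
  · simp
  · exact edist_le_maxDyadicIncrement (by omega) ω

lemma edist_dyadicFloor_le_tsum {t : ℝ} (ht : t ≤ T) (m J : ℕ) (ω : Ω) :
    edist (Y (dyadicFloor m t) ω) (Y (dyadicFloor (m + J) t) ω) ≤
      ∑' i, maxDyadicIncrement T Y (m + 1 + i) ω := by
  refine (edist_le_range_sum_edist (fun i => Y (dyadicFloor (m + i) t) ω) J).trans ?_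
  refine (Finset.sum_le_sum fun i _ => ?_).trans
    (ENNReal.sum_le_tsum (f := fun i => maxDyadicIncrement T Y (m + 1 + i) ω) _)
  have h := edist_dyadicFloor_succ_le (Y := Y) ht (m + i) ω
  rwa [← add_assoc, add_right_comm m 1 i]

lemma tsum_maxDyadicIncrement_succ_le (m : ℕ) (ω : Ω) :
    ∑' i, maxDyadicIncrement T Y (m + 1 + i) ω ≤ ∑' i, maxDyadicIncrement T Y (m + i) ω := by
  simpa [add_assoc, add_comm 1] using ENNReal.tsum_comp_le_tsum_of_injective
    (add_right_injective 1) (fun i => maxDyadicIncrement T Y (m + i) ω)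

lemma edist_dyadicFloor_dyadicGrid_le {p a : ℕ} (h : dyadicGrid p a ≤ T) (m : ℕ) (ω : Ω) :
    edist (Y (dyadicFloor m (dyadicGrid p a)) ω) (Y (dyadicGrid p a) ω) ≤
      ∑' i, maxDyadicIncrement T Y (m + i) ω := by
  have h' := edist_dyadicFloor_le_tsum (Y := Y) h m p ω
  rw [dyadicFloor_dyadicGrid (Nat.le_add_left p m)] at h'
  exact h'.trans (tsum_maxDyadicIncrement_succ_le m ω)

lemma edist_dyadicGrid_le_tsum (hT : 0 ≤ T) {p a b : ℕ} (hab : a ≤ b) (hb : b ≤ ⌊T * 2 ^ p⌋₊)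
    (m : ℕ) (ω : Ω) :
    edist (Y (dyadicGrid p a) ω) (Y (dyadicGrid p b) ω) ≤
      ((⌊dyadicGrid p b * 2 ^ m⌋₊ - ⌊dyadicGrid p a * 2 ^ m⌋₊ : ℕ) + 2) *
        ∑' i, maxDyadicIncrement T Y (m + i) ω := by
  set u := dyadicGrid p a
  set v := dyadicGrid p b
  set S := ∑' i, maxDyadicIncrement T Y (m + i) ω
  have hv : v ≤ T := dyadicGrid_le_of_le_floor hT hb
  have hu : u ≤ T := (dyadicGrid_mono p hab).trans hv
  have hmid : edist (Y (dyadicFloor m u) ω) (Y (dyadicFloor m v) ω) ≤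
      (⌊v * 2 ^ m⌋₊ - ⌊u * 2 ^ m⌋₊ : ℕ) * S := by
    refine (edist_dyadicGrid_le (T := T) (Nat.floor_le_floor ?_) (Nat.floor_le_floor ?_)
      ω).trans ?_
    · exact mul_le_mul_of_nonneg_right (dyadicGrid_mono p hab) (by positivity)
    · gcongr
    · gcongr
      simpa using ENNReal.le_tsum (f := fun i => maxDyadicIncrement T Y (m + i) ω) 0
  calc edist (Y u ω) (Y v ω)
      ≤ edist (Y (dyadicFloor m u) ω) (Y u ω) +
          edist (Y (dyadicFloor m u) ω) (Y (dyadicFloor m v) ω) +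
          edist (Y (dyadicFloor m v) ω) (Y v ω) := by
        rw [edist_comm (Y (dyadicFloor m u) ω)]
        exact edist_triangle4 _ _ _ _
    _ ≤ S + (⌊v * 2 ^ m⌋₊ - ⌊u * 2 ^ m⌋₊ : ℕ) * S + S := by
        gcongr
        exacts [edist_dyadicFloor_dyadicGrid_le hu m ω, edist_dyadicFloor_dyadicGrid_le hv m ω]
    _ = _ := by ring

end Chaining

section HolderConst

variable {Ω E : Type*} [PseudoEMetricSpace E] {T γ : ℝ} {Y : ℝ → Ω → E}

lemma two_rpow_inv_lt_one (hγ : 0 < γ) : ((2 : ℝ) ^ γ)⁻¹ < 1 :=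
  inv_lt_one_of_one_lt₀ (Real.one_lt_rpow one_lt_two hγ)

lemma maxDyadicIncrement_le (j : ℕ) (ω : Ω) :
    maxDyadicIncrement T Y j ω ≤
      ENNReal.ofReal (((2 : ℝ) ^ γ)⁻¹ ^ j) * dyadicHolderConst T Y γ ω := by
  calc maxDyadicIncrement T Y j ω
      = ENNReal.ofReal (((2 : ℝ) ^ γ)⁻¹ ^ j) *
          (ENNReal.ofReal (((2 : ℝ) ^ γ) ^ j) * maxDyadicIncrement T Y j ω) := by
        rw [← mul_assoc, ← ENNReal.ofReal_mul (by positivity), ← mul_pow,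
          inv_mul_cancel₀ (by positivity), one_pow, ENNReal.ofReal_one, one_mul]
    _ ≤ _ := by
        gcongr
        exact le_iSup (fun j => ENNReal.ofReal (((2 : ℝ) ^ γ) ^ j) * maxDyadicIncrement T Y j ω) j

lemma tsum_maxDyadicIncrement_le (hγ : 0 < γ) (m : ℕ) (ω : Ω) :
    ∑' i, maxDyadicIncrement T Y (m + i) ω ≤
      ENNReal.ofReal (((2 : ℝ) ^ γ)⁻¹ ^ m / (1 - ((2 : ℝ) ^ γ)⁻¹)) * dyadicHolderConst T Y γ ω := by
  set θ := ((2 : ℝ) ^ γ)⁻¹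
  have hθ : θ < 1 := two_rpow_inv_lt_one hγ
  have hgeom : ∑' i, θ ^ (m + i) = θ ^ m / (1 - θ) := by
    simp_rw [pow_add, tsum_mul_left, tsum_geometric_of_lt_one (by positivity) hθ, div_eq_mul_inv]
  calc ∑' i, maxDyadicIncrement T Y (m + i) ω
      ≤ ∑' i, ENNReal.ofReal (θ ^ (m + i)) * dyadicHolderConst T Y γ ω :=
        ENNReal.tsum_le_tsum fun i => maxDyadicIncrement_le _ ω
    _ = _ := by
        rw [ENNReal.tsum_mul_right, ← ENNReal.ofReal_tsum_of_nonneg (fun _ => by positivity)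
          ((summable_geometric_of_lt_one (by positivity) hθ).mul_left (θ ^ m) |>.congr
            fun i => (pow_add θ m i).symm), hgeom]

def holderConst (T γ : ℝ) : ℝ := (T + 4) * 2 ^ γ / (1 - ((2 : ℝ) ^ γ)⁻¹)

lemma holderConst_pos (hT : 0 ≤ T) (hγ : 0 < γ) : 0 < holderConst T γ :=
  div_pos (by positivity) (sub_pos.2 (two_rpow_inv_lt_one hγ))

lemma edist_dyadicGrid_le_holder (hT : 0 ≤ T) (hγ : 0 < γ) {p a b : ℕ} (hab : a ≤ b)
    (hb : b ≤ ⌊T * 2 ^ p⌋₊) (ω : Ω) :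
    edist (Y (dyadicGrid p a) ω) (Y (dyadicGrid p b) ω) ≤
      ENNReal.ofReal (holderConst T γ * (dyadicGrid p b - dyadicGrid p a) ^ γ) *
        dyadicHolderConst T Y γ ω := by
  rcases hab.eq_or_lt with rfl | hlt
  · simp
  set u := dyadicGrid p a
  set v := dyadicGrid p b
  have huv : 0 < v - u :=
    sub_pos.2 (div_lt_div_of_pos_right (by exact_mod_cast hlt) (by positivity))
  have hvuT : v - u ≤ T := by
    linarith [dyadicGrid_le_of_le_floor hT hb, dyadicGrid_nonneg p a]
  obtain ⟨m, hm⟩ := exists_pow_mul_inv_pow_le hγ huv hvuT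
  set θ := ((2 : ℝ) ^ γ)⁻¹
  have hθ : 0 < 1 - θ := sub_pos.2 (two_rpow_inv_lt_one hγ)
  have hN : ((⌊v * 2 ^ m⌋₊ - ⌊u * 2 ^ m⌋₊ : ℕ) : ℝ) ≤ (v - u) * 2 ^ m + 1 := by
    have hfl : ⌊u * 2 ^ m⌋₊ ≤ ⌊v * 2 ^ m⌋₊ := Nat.floor_le_floor (by gcongr; linarith)
    rw [Nat.cast_sub hfl]
    linarith [Nat.floor_le (mul_nonneg (dyadicGrid_nonneg p b) (by positivity) : 0 ≤ v * 2 ^ m),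
      Nat.lt_floor_add_one (u * 2 ^ m)]
  calc edist (Y u ω) (Y v ω)
      ≤ ((⌊v * 2 ^ m⌋₊ - ⌊u * 2 ^ m⌋₊ : ℕ) + 2) * ∑' i, maxDyadicIncrement T Y (m + i) ω :=
        edist_dyadicGrid_le_tsum hT hab hb m ω
    _ ≤ ENNReal.ofReal ((v - u) * 2 ^ m + 3) *
          (ENNReal.ofReal (θ ^ m / (1 - θ)) * dyadicHolderConst T Y γ ω) := by
        gcongr
        · rw [← ENNReal.ofReal_natCast, ← ENNReal.ofReal_ofNat 2,
            ← ENNReal.ofReal_add (by positivity) zero_le_two]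
          exact ENNReal.ofReal_le_ofReal (by linarith)
        · exact tsum_maxDyadicIncrement_le hγ m ω
    _ ≤ _ := by
        rw [← mul_assoc, ← ENNReal.ofReal_mul (by positivity)]
        gcongr ENNReal.ofReal ?_ * _
        rw [holderConst, mul_div_assoc', div_le_iff₀ hθ, div_mul_eq_mul_div,
          div_mul_cancel₀ _ hθ.ne']
        linarith

end HolderConst

lemma iSup_rpow_le_tsum_rpow {ι : Type*} (f : ι → ℝ≥0∞) {p : ℝ} (hp : 0 < p) :
    (⨆ i, f i) ^ p ≤ ∑' i, f i ^ p := by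
  rw [← ENNReal.orderIsoRpow_apply p hp, OrderIso.map_iSup]
  exact iSup_le fun i => ENNReal.le_tsum i

lemma biSup_rpow_le_sum_rpow {ι : Type*} (s : Finset ι) (f : ι → ℝ≥0∞) {p : ℝ} (hp : 0 < p) :
    (⨆ i ∈ s, f i) ^ p ≤ ∑ i ∈ s, f i ^ p := by
  rw [← ENNReal.orderIsoRpow_apply p hp, map_iSup₂]
  exact iSup₂_le fun i hi => Finset.single_le_sum (f := fun i => f i ^ p) (fun _ _ => zero_le) hi

lemma meas_ge_le_lintegral_rpow_div {Ω : Type*} [MeasurableSpace Ω] {μ : Measure Ω}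
    {f : Ω → ℝ≥0∞} (hf : AEMeasurable f μ) {p : ℝ} (hp : 0 < p) {ε : ℝ≥0∞} (hε : ε ≠ 0)
    (hε' : ε ≠ ⊤) : μ {ω | ε ≤ f ω} ≤ (∫⁻ ω, f ω ^ p ∂μ) / ε ^ p :=
  (measure_mono fun _ h => ENNReal.rpow_le_rpow h hp.le).trans <|
    meas_ge_le_lintegral_div (hf.pow_const p) (by simp [hε, hp.le])
      (by simp [hε', hp.le])

lemma ae_ne_top_of_lintegral_rpow_ne_top {Ω : Type*} [MeasurableSpace Ω] {μ : Measure Ω}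
    {f : Ω → ℝ≥0∞} (hf : Measurable f) {p : ℝ} (hp : 0 < p) (hfp : ∫⁻ ω, f ω ^ p ∂μ ≠ ⊤) :
    ∀ᵐ ω ∂μ, f ω ≠ ⊤ := by
  filter_upwards [ae_lt_top (hf.pow_const p) hfp] with ω hω
  rintro h
  simp [h, ENNReal.top_rpow_of_pos hp] at hω

def KolmogorovCondition {Ω E : Type*} [MeasurableSpace Ω] [PseudoEMetricSpace E]
    (μ : Measure Ω) (Y : ℝ → Ω → E) (T α β K : ℝ) : Prop :=
  ∀ s ∈ Set.Icc 0 T, ∀ t ∈ Set.Icc 0 T,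
    ∫⁻ ω, edist (Y t ω) (Y s ω) ^ α ∂μ ≤ ENNReal.ofReal (K * |t - s| ^ (1 + β))

section Moments

variable {Ω E : Type*} [MeasurableSpace Ω] {μ : Measure Ω} [PseudoEMetricSpace E]
  {T α β γ K : ℝ} {Y : ℝ → Ω → E}

lemma measurable_maxDyadicIncrement (hY : ∀ s t, Measurable fun ω => edist (Y s ω) (Y t ω))
    (j : ℕ) : Measurable (maxDyadicIncrement T Y j) :=
  Measurable.iSup fun _ => Measurable.iSup fun _ => hY _ _

lemma measurable_dyadicHolderConst (hY : ∀ s t, Measurable fun ω => edist (Y s ω) (Y t ω)) :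
    Measurable (dyadicHolderConst T Y γ) :=
  Measurable.iSup fun j => (measurable_maxDyadicIncrement hY j).const_mul _

lemma lintegral_maxDyadicIncrement_rpow_le (hT : 0 ≤ T) (hα : 0 < α)
    (hY : ∀ s t, Measurable fun ω => edist (Y s ω) (Y t ω))
    (hmom : KolmogorovCondition μ Y T α β K) (j : ℕ) :
    ∫⁻ ω, maxDyadicIncrement T Y j ω ^ α ∂μ ≤
      ENNReal.ofReal (K * T * ((2 : ℝ) ^ β)⁻¹ ^ j) := by
  set N := ⌊T * 2 ^ j⌋₊
  have hgap : ∀ k : ℕ, |dyadicGrid j k - dyadicGrid j (k + 1)| = ((2 : ℝ) ^ j)⁻¹ := fun k => by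
    rw [abs_sub_comm, dyadicGrid_sub_dyadicGrid (Nat.le_add_right k 1), Nat.add_sub_cancel_left,
      Nat.cast_one, one_div, abs_of_pos (by positivity)]
  have hpow : ((2 : ℝ) ^ j)⁻¹ ^ (1 + β) = ((2 : ℝ) ^ j)⁻¹ * ((2 : ℝ) ^ β)⁻¹ ^ j := by
    rw [Real.rpow_add (by positivity), Real.rpow_one, Real.inv_rpow (by positivity),
      ← Real.rpow_pow_comm zero_le_two, inv_pow]
  have hN : (N : ℝ) ≤ T * 2 ^ j := Nat.floor_le (by positivity)
  calc ∫⁻ ω, maxDyadicIncrement T Y j ω ^ α ∂μ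
      ≤ ∫⁻ ω, ∑ k ∈ Finset.range N,
          edist (Y (dyadicGrid j k) ω) (Y (dyadicGrid j (k + 1)) ω) ^ α ∂μ :=
        lintegral_mono fun ω => biSup_rpow_le_sum_rpow _ _ hα
    _ = ∑ k ∈ Finset.range N,
          ∫⁻ ω, edist (Y (dyadicGrid j k) ω) (Y (dyadicGrid j (k + 1)) ω) ^ α ∂μ :=
        lintegral_finsetSum _ fun k _ => (hY _ _).pow_const α
    _ ≤ ∑ _k ∈ Finset.range N, ENNReal.ofReal (K * ((2 : ℝ) ^ j)⁻¹ ^ (1 + β)) := by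
        gcongr with k hk
        have hk' : k + 1 ≤ N := Finset.mem_range.1 hk
        simpa [hgap] using hmom _ ⟨dyadicGrid_nonneg _ _, dyadicGrid_le_of_le_floor hT hk'⟩ _
          ⟨dyadicGrid_nonneg _ _, dyadicGrid_le_of_le_floor hT (Nat.le_of_succ_le hk')⟩
    _ ≤ ENNReal.ofReal (T * 2 ^ j) * ENNReal.ofReal (K * ((2 : ℝ) ^ j)⁻¹ ^ (1 + β)) := by
        rw [Finset.sum_const, Finset.card_range, nsmul_eq_mul, ← ENNReal.ofReal_natCast]
        gcongr
    _ = ENNReal.ofReal (K * T * ((2 : ℝ) ^ β)⁻¹ ^ j) := by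
        rw [← ENNReal.ofReal_mul (by positivity), hpow]
        congr 1
        field_simp

lemma lintegral_dyadicHolderConst_rpow_le (hT : 0 ≤ T) (hK : 0 ≤ K) (hα : 0 < α)
    (hγαβ : γ * α < β) (hY : ∀ s t, Measurable fun ω => edist (Y s ω) (Y t ω))
    (hmom : KolmogorovCondition μ Y T α β K) :
    ∫⁻ ω, dyadicHolderConst T Y γ ω ^ α ∂μ ≤
      ENNReal.ofReal (K * T / (1 - (2 : ℝ) ^ (γ * α - β))) := by
  set r := (2 : ℝ) ^ (γ * α - β)
  have hr : r < 1 := Real.rpow_lt_one_of_one_lt_of_neg one_lt_two (by linarith)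
  have hweight : ∀ j : ℕ, (((2 : ℝ) ^ γ) ^ j) ^ α * (K * T * ((2 : ℝ) ^ β)⁻¹ ^ j) =
      K * T * r ^ j := fun j => by
    rw [← Real.rpow_pow_comm (by positivity), ← Real.rpow_mul zero_le_two, ← Real.rpow_neg
      zero_le_two, mul_left_comm, ← mul_pow, ← Real.rpow_add two_pos, ← sub_eq_add_neg]
  calc ∫⁻ ω, dyadicHolderConst T Y γ ω ^ α ∂μ
      ≤ ∫⁻ ω, ∑' j : ℕ,
          ENNReal.ofReal ((((2 : ℝ) ^ γ) ^ j) ^ α) * maxDyadicIncrement T Y j ω ^ α ∂μ := by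
        refine lintegral_mono fun ω => (iSup_rpow_le_tsum_rpow _ hα).trans_eq
          (tsum_congr fun j => ?_)
        rw [ENNReal.mul_rpow_of_nonneg _ _ hα.le, ENNReal.ofReal_rpow_of_nonneg (by positivity)
          hα.le]
    _ = ∑' j : ℕ, ENNReal.ofReal ((((2 : ℝ) ^ γ) ^ j) ^ α) *
          ∫⁻ ω, maxDyadicIncrement T Y j ω ^ α ∂μ := by
        rw [lintegral_tsum fun j => (((measurable_maxDyadicIncrement hY j).pow_const α).const_mul
          _).aemeasurable]
        simp_rw [lintegral_const_mul _ ((measurable_maxDyadicIncrement hY _).pow_const α)]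
    _ ≤ ∑' j : ℕ, ENNReal.ofReal (K * T * r ^ j) := by
        gcongr with j
        rw [← hweight, ENNReal.ofReal_mul (by positivity)]
        gcongr
        exact lintegral_maxDyadicIncrement_rpow_le hT hα hY hmom j
    _ = ENNReal.ofReal (K * T / (1 - r)) := by
        rw [← ENNReal.ofReal_tsum_of_nonneg (fun _ => by positivity)
          ((summable_geometric_of_lt_one (by positivity) hr).mul_left _), tsum_mul_left,
          tsum_geometric_of_lt_one (by positivity) hr, div_eq_mul_inv]

lemma tendstoInMeasure_dyadicFloor (hα : 0 < α) (hβ : 0 < β)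
    (hY : ∀ s t, Measurable fun ω => edist (Y s ω) (Y t ω))
    (hmom : KolmogorovCondition μ Y T α β K)
    {t : ℝ} (ht : t ∈ Set.Icc 0 T) :
    TendstoInMeasure μ (fun m => Y (dyadicFloor m t)) atTop (Y t) := by
  refine tendstoInMeasure_of_ne_top fun ε hε hε' => ?_
  have hbound : ∀ m, μ {ω | ε ≤ edist (Y (dyadicFloor m t) ω) (Y t ω)} ≤
      ENNReal.ofReal (K * |t - dyadicFloor m t| ^ (1 + β)) / ε ^ α := fun m =>
    (meas_ge_le_lintegral_rpow_div (hY _ _).aemeasurable hα hε.ne' hε').trans <| by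
      gcongr
      simp_rw [edist_comm (Y (dyadicFloor m t) _)]
      exact hmom _ ⟨dyadicFloor_nonneg m t, (dyadicFloor_le ht.1 m).trans ht.2⟩ t ht
  have hlim : Tendsto (fun m => ENNReal.ofReal (K * |t - dyadicFloor m t| ^ (1 + β)) / ε ^ α)
      atTop (𝓝 (ENNReal.ofReal (K * |t - t| ^ (1 + β)) / ε ^ α)) :=
    ENNReal.Tendsto.div_const (ENNReal.tendsto_ofReal (((tendsto_const_nhds.sub
      (tendsto_dyadicFloor ht.1)).abs.rpow_const (.inr (by positivity))).const_mul K))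
      (.inr (by simp [hε.ne', hε']))
  rw [sub_self, abs_zero, Real.zero_rpow (by positivity), mul_zero, ENNReal.ofReal_zero,
    ENNReal.zero_div] at hlim
  exact tendsto_of_tendsto_of_tendsto_of_le_of_le tendsto_const_nhds hlim (fun _ => zero_le)
    hbound

end Moments

section Limit

variable {Ω E : Type*} [MetricSpace E] [Nonempty E] {T γ : ℝ} {Y : ℝ → Ω → E}

-- `limUnder` returns an arbitrary point where the approximations diverge, which happens only
-- where `dyadicHolderConst` is infinite.
variable (Y) in
def dyadicLimit (t : ℝ) (ω : Ω) : E := limUnder atTop fun m => Y (dyadicFloor m t) ω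

variable [CompleteSpace E]

lemma tendsto_dyadicLimit (hγ : 0 < γ) {ω : Ω}
    (hω : dyadicHolderConst T Y γ ω ≠ ⊤) {t : ℝ} (ht : t ≤ T) :
    Tendsto (fun m => Y (dyadicFloor m t) ω) atTop (𝓝 (dyadicLimit Y t ω)) := by
  refine tendsto_nhds_limUnder (cauchySeq_tendsto_of_complete ?_)
  refine cauchySeq_of_edist_le_of_tsum_ne_top (fun m => maxDyadicIncrement T Y (1 + m) ω)
    (fun m => add_comm m 1 ▸ edist_dyadicFloor_succ_le ht m ω) ?_
  exact ne_top_of_le_ne_top (ENNReal.mul_ne_top ENNReal.ofReal_ne_top hω)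
    (tsum_maxDyadicIncrement_le hγ 1 ω)

lemma edist_dyadicLimit_le (hT : 0 ≤ T) (hγ : 0 < γ) (ω : Ω) {s t : ℝ}
    (hs : s ∈ Set.Icc 0 T) (ht : t ∈ Set.Icc 0 T) :
    edist (dyadicLimit Y s ω) (dyadicLimit Y t ω) ≤
      ENNReal.ofReal (holderConst T γ) * dyadicHolderConst T Y γ ω *
        ENNReal.ofReal (|t - s| ^ γ) := by
  wlog hst : s ≤ t generalizing s t
  · rw [edist_comm, abs_sub_comm]
    exact this ht hs (le_of_not_ge hst)
  set Z := dyadicHolderConst T Y γ ω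
  rcases eq_or_ne Z ⊤ with hZ | hZ
  · rcases hst.eq_or_lt with rfl | hlt
    · simp
    rw [hZ, ENNReal.mul_top (by simp [holderConst_pos hT hγ]), ENNReal.top_mul
      (by simp [Real.rpow_pos_of_pos (abs_pos.2 (sub_ne_zero.2 hlt.ne')) γ])]
    exact le_top
  have hL := (tendsto_dyadicLimit hγ hZ hs.2).edist (tendsto_dyadicLimit hγ hZ ht.2)
  have hR : Tendsto (fun m => ENNReal.ofReal
      (holderConst T γ * (dyadicFloor m t - dyadicFloor m s) ^ γ) * Z) atTop
      (𝓝 (ENNReal.ofReal (holderConst T γ * (t - s) ^ γ) * Z)) :=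
    ENNReal.Tendsto.mul_const (ENNReal.tendsto_ofReal
      ((((tendsto_dyadicFloor ht.1).sub (tendsto_dyadicFloor hs.1)).rpow_const
        (Or.inr hγ.le)).const_mul _)) (.inr hZ)
  have hbound := le_of_tendsto_of_tendsto' hL hR fun m =>
    edist_dyadicGrid_le_holder hT hγ (Nat.floor_le_floor (by gcongr))
      (Nat.floor_le_floor (by gcongr; exact ht.2)) ω
  rwa [abs_of_nonneg (sub_nonneg.2 hst), mul_right_comm, ← ENNReal.ofReal_mul
    (holderConst_pos hT hγ).le]

variable [MeasurableSpace Ω] {μ : Measure Ω} {α β K : ℝ}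

lemma dyadicLimit_ae_eq (hα : 0 < α) (hβ : 0 < β) (hγ : 0 < γ)
    (hY : ∀ s t, Measurable fun ω => edist (Y s ω) (Y t ω))
    (hmom : KolmogorovCondition μ Y T α β K)
    (hZ : ∀ᵐ ω ∂μ, dyadicHolderConst T Y γ ω ≠ ⊤) {t : ℝ} (ht : t ∈ Set.Icc 0 T) :
    dyadicLimit Y t =ᵐ[μ] Y t := by
  obtain ⟨ns, hns, hlim⟩ :=
    (tendstoInMeasure_dyadicFloor hα hβ hY hmom ht).exists_seq_tendsto_ae
  filter_upwards [hZ, hlim] with ω hω hωlim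
  exact tendsto_nhds_unique ((tendsto_dyadicLimit hγ hω ht.2).comp hns.tendsto_atTop) hωlim

end Limit

def holderMomentBound (T α β γ K : ℝ) : ℝ :=
  holderConst T γ ^ α * (K * T / (1 - (2 : ℝ) ^ (γ * α - β)))

lemma holderMomentBound_nonneg {T α β γ K : ℝ} (hT : 0 ≤ T) (hK : 0 ≤ K) (hγ : 0 < γ)
    (hγαβ : γ * α < β) : 0 ≤ holderMomentBound T α β γ K :=
  mul_nonneg (Real.rpow_nonneg (holderConst_pos hT hγ).le _) (div_nonneg (by positivity)
    (sub_nonneg.2 (Real.rpow_lt_one_of_one_lt_of_neg one_lt_two (by linarith)).le))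

theorem exists_holder_modification {Ω E : Type*} [MeasurableSpace Ω] {μ : Measure Ω}
    [MetricSpace E] [Nonempty E] [CompleteSpace E] {T α β γ K : ℝ} {Y : ℝ → Ω → E}
    (hT : 0 ≤ T) (hK : 0 ≤ K) (hα : 0 < α) (hβ : 0 < β) (hγ : 0 < γ) (hγαβ : γ * α < β)
    (hY : ∀ s t, Measurable fun ω => edist (Y s ω) (Y t ω))
    (hmom : KolmogorovCondition μ Y T α β K) :
    ∃ (Y' : ℝ → Ω → E) (W : Ω → ℝ≥0∞), (∀ t ∈ Set.Icc 0 T, Y' t =ᵐ[μ] Y t) ∧ Measurable W ∧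
      ∫⁻ ω, W ω ^ α ∂μ ≤ ENNReal.ofReal (holderMomentBound T α β γ K) ∧
      ∀ ω, ∀ s ∈ Set.Icc 0 T, ∀ t ∈ Set.Icc 0 T,
        edist (Y' s ω) (Y' t ω) ≤ W ω * ENNReal.ofReal (|t - s| ^ γ) := by
  have hZ := lintegral_dyadicHolderConst_rpow_le hT hK hα hγαβ hY hmom
  have hZfin := ae_ne_top_of_lintegral_rpow_ne_top (measurable_dyadicHolderConst hY) hα
    (ne_top_of_le_ne_top ENNReal.ofReal_ne_top hZ)
  refine ⟨dyadicLimit Y, fun ω => ENNReal.ofReal (holderConst T γ) * dyadicHolderConst T Y γ ω,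
    fun t ht => dyadicLimit_ae_eq hα hβ hγ hY hmom hZfin ht,
    (measurable_dyadicHolderConst hY).const_mul _, ?_, fun ω _ hs _ ht =>
      edist_dyadicLimit_le hT hγ ω hs ht⟩
  simp_rw [ENNReal.mul_rpow_of_nonneg _ _ hα.le]
  rw [lintegral_const_mul _ ((measurable_dyadicHolderConst hY).pow_const α), holderMomentBound,
    ENNReal.ofReal_mul (Real.rpow_nonneg (holderConst_pos hT hγ).le _),
    ← ENNReal.ofReal_rpow_of_nonneg (holderConst_pos hT hγ).le hα.le]
  gcongr

/-- Markov's inequality for `f ≥ M / 2` and `g ≥ M / 2`, where `∫ f ≤ C` and `∫ g ^ α ≤ B`;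
the case `M ≤ 0` is split off because of the junk value `x / 0 = 0`. -/
def holderTail (C B α M : ℝ) : ℝ := if 0 < M then min 1 (C / (M / 2) + B / (M / 2) ^ α) else 1

lemma holderTail_mem_Icc {C B : ℝ} (hC : 0 ≤ C) (hB : 0 ≤ B) (α M : ℝ) :
    holderTail C B α M ∈ Set.Icc 0 1 := by
  unfold holderTail
  split_ifs with hM
  · exact ⟨le_min zero_le_one (by positivity), min_le_left _ _⟩
  · exact ⟨zero_le_one, le_rfl⟩

lemma tendsto_holderTail (C B : ℝ) {α : ℝ} (hα : 0 < α) :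
    Tendsto (holderTail C B α) atTop (𝓝 0) := by
  have hM2 : Tendsto (fun M : ℝ => M / 2) atTop atTop := tendsto_id.atTop_div_const two_pos
  have h : Tendsto (fun M : ℝ => min 1 (C / (M / 2) + B / (M / 2) ^ α)) atTop (𝓝 (min 1 (0 + 0))) :=
    tendsto_const_nhds.min ((hM2.const_div_atTop C).add
      (((tendsto_rpow_atTop hα).comp hM2).const_div_atTop B))
  rw [add_zero, min_eq_right zero_le_one] at h
  exact h.congr' (by filter_upwards [eventually_gt_atTop 0] with M hM; simp [holderTail, hM])

lemma measure_lt_add_le_holderTail {Ω : Type*} [MeasurableSpace Ω] {μ : Measure Ω}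
    [IsProbabilityMeasure μ] {f g : Ω → ℝ≥0∞} {C B α M : ℝ} (hf : AEMeasurable f μ)
    (hg : AEMeasurable g μ) (hC : 0 ≤ C) (hB : 0 ≤ B) (hα : 0 < α)
    (hfC : ∫⁻ ω, f ω ∂μ ≤ ENNReal.ofReal C) (hgB : ∫⁻ ω, g ω ^ α ∂μ ≤ ENNReal.ofReal B) :
    μ {ω | ENNReal.ofReal M < f ω + g ω} ≤ ENNReal.ofReal (holderTail C B α M) := by
  unfold holderTail
  split_ifs with hM
  swap
  · simpa using prob_le_one
  rw [ENNReal.ofReal_min, ENNReal.ofReal_one]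
  refine le_min prob_le_one ?_
  have hM2 : 0 < M / 2 := half_pos hM
  have hsplit : {ω | ENNReal.ofReal M < f ω + g ω} ⊆
      {ω | ENNReal.ofReal (M / 2) ≤ f ω} ∪ {ω | ENNReal.ofReal (M / 2) ≤ g ω} := by
    intro ω hω
    by_contra h
    rw [Set.mem_union, not_or] at h
    have := ENNReal.add_lt_add (not_le.1 h.1) (not_le.1 h.2)
    rw [← ENNReal.ofReal_add hM2.le hM2.le, add_halves] at this
    exact lt_asymm hω this
  calc μ {ω | ENNReal.ofReal M < f ω + g ω}
      ≤ μ {ω | ENNReal.ofReal (M / 2) ≤ f ω} + μ {ω | ENNReal.ofReal (M / 2) ≤ g ω} :=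
        (measure_mono hsplit).trans (measure_union_le _ _)
    _ ≤ ENNReal.ofReal C / ENNReal.ofReal (M / 2) +
          ENNReal.ofReal B / ENNReal.ofReal (M / 2) ^ α := by
        gcongr
        · exact (meas_ge_le_lintegral_div hf (by simpa using hM2) ENNReal.ofReal_ne_top).trans
            (by gcongr)
        · exact (meas_ge_le_lintegral_rpow_div hg hα (by simpa using hM2)
            ENNReal.ofReal_ne_top).trans (by gcongr)
    _ = ENNReal.ofReal (C / (M / 2) + B / (M / 2) ^ α) := by
        rw [ENNReal.ofReal_rpow_of_nonneg hM2.le hα.le, ← ENNReal.ofReal_div_of_pos hM2,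
          ← ENNReal.ofReal_div_of_pos (by positivity), ENNReal.ofReal_add (by positivity)
          (by positivity)]

lemma eNorm_nonneg {n : ℕ} (x : Fin n → ℝ) : 0 ≤ eNorm x := Real.sqrt_nonneg _

lemma continuous_eNorm {n : ℕ} : Continuous (eNorm : (Fin n → ℝ) → ℝ) := by
  unfold eNorm; fun_prop

lemma eNorm_sub_eq_dist {n : ℕ} (x y : Fin n → ℝ) :
    eNorm (x - y) = dist (WithLp.toLp 2 x) (WithLp.toLp 2 y) := by
  simp [eNorm, EuclideanSpace.dist_eq, Real.dist_eq, sq_abs]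

lemma iSup_ofReal_dist_div_rpow_le {E : Type*} [PseudoMetricSpace E] {f : ℝ → E} {T γ : ℝ}
    {w : ℝ≥0∞} (hf : ∀ s ∈ Set.Icc 0 T, ∀ t ∈ Set.Icc 0 T,
      edist (f s) (f t) ≤ w * ENNReal.ofReal (|t - s| ^ γ)) :
    ⨆ (s : ℝ) (t : ℝ) (_ : 0 ≤ s) (_ : s < t) (_ : t ≤ T),
      ENNReal.ofReal (dist (f t) (f s) / (t - s) ^ γ) ≤ w := by
  refine iSup_le fun s => iSup_le fun t => iSup_le fun hs => iSup_le fun hst => iSup_le fun ht => ?_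
  have hpos : 0 < (t - s) ^ γ := Real.rpow_pos_of_pos (sub_pos.2 hst) γ
  rw [ENNReal.ofReal_div_of_pos hpos, ← edist_dist, edist_comm]
  refine ENNReal.div_le_of_le_mul ?_
  simpa [abs_of_pos (sub_pos.2 hst)] using hf s ⟨hs, by linarith⟩ t ⟨by linarith, ht⟩

lemma dist_le_of_edist_le {E : Type*} [PseudoMetricSpace E] {f : ℝ → E} {T γ : ℝ}
    {w : ℝ≥0∞} (hw : w ≠ ⊤) (hf : ∀ s ∈ Set.Icc 0 T, ∀ t ∈ Set.Icc 0 T,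
      edist (f s) (f t) ≤ w * ENNReal.ofReal (|t - s| ^ γ)) :
    ∀ s ∈ Set.Icc 0 T, ∀ t ∈ Set.Icc 0 T, dist (f t) (f s) ≤ w.toReal * |t - s| ^ γ := by
  intro s hs t ht
  rw [dist_comm, dist_edist]
  simpa [ENNReal.toReal_mul, Real.rpow_nonneg (abs_nonneg _)] using
    ENNReal.toReal_mono (ENNReal.mul_ne_top hw ENNReal.ofReal_ne_top) (hf s hs t ht)

end

/-- a quantitative Kolmogorov continuity criterion.  Given
`T, α, β, γ, K, C > 0` with `γ < β/α`, there is a tail function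
`A : [0,∞) → [0,1]` with `A(M) → 0` as `M → ∞`, depending only on these
constants, such that any `ℝⁿ`-valued process on any probability space satisfying
`E[|X_t − X_s|^α] ≤ K |t−s|^{1+β}` on `[0,T]` and
`E[sup_{t ∈ [0,T] ∩ D} |X_t|] ≤ C` (over dyadics `D`) admits a modification with
a.s. `γ`-Hölder paths whose Hölder norm satisfies `P(‖X̃‖_γ > M) ≤ A(M)`. -/
theorem stmt_3 (T α β γ K C : ℝ) (hT : 0 < T) (hα : 0 < α) (hβ : 0 < β)
    (hγ : 0 < γ) (hK : 0 < K) (hC : 0 < C) (hγβα : γ < β / α) :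
    ∃ A : ℝ → ℝ, (∀ M : ℝ, 0 ≤ M → A M ∈ Set.Icc (0 : ℝ) 1) ∧
      Tendsto A atTop (nhds 0) ∧
      ∀ (n : ℕ), 1 ≤ n →
      ∀ (Ω : Type*) (_ : MeasurableSpace Ω) (μ : Measure Ω), IsProbabilityMeasure μ →
      ∀ X : ℝ → Ω → (Fin n → ℝ),
        (∀ t, Measurable (X t)) →
        (∀ s ∈ Set.Icc (0 : ℝ) T, ∀ t ∈ Set.Icc (0 : ℝ) T,
          ∫⁻ ω, ENNReal.ofReal (eNorm (X t ω - X s ω) ^ α) ∂μ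
            ≤ ENNReal.ofReal (K * |t - s| ^ (1 + β))) →
        (∫⁻ ω, ⨆ (t : ℝ) (_ : t ∈ Set.Icc (0 : ℝ) T ∩ dyadics),
            ENNReal.ofReal (eNorm (X t ω)) ∂μ ≤ ENNReal.ofReal C) →
        ∃ Xmod : ℝ → Ω → (Fin n → ℝ),
          (∀ t ∈ Set.Icc (0 : ℝ) T, ∀ᵐ ω ∂μ, Xmod t ω = X t ω) ∧
          (∀ᵐ ω ∂μ, ∃ c : ℝ, ∀ s ∈ Set.Icc (0 : ℝ) T, ∀ t ∈ Set.Icc (0 : ℝ) T,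
            eNorm (Xmod t ω - Xmod s ω) ≤ c * |t - s| ^ γ) ∧
          ∀ M : ℝ, 0 ≤ M →
            μ {ω | ENNReal.ofReal M <
                ENNReal.ofReal (eNorm (Xmod 0 ω)) +
                  ⨆ (s : ℝ) (t : ℝ) (_ : 0 ≤ s) (_ : s < t) (_ : t ≤ T),
                    ENNReal.ofReal (eNorm (Xmod t ω - Xmod s ω) / (t - s) ^ γ)}
              ≤ ENNReal.ofReal (A M) := by
  have hγαβ : γ * α < β := (lt_div_iff₀ hα).1 hγβα
  have hB := holderMomentBound_nonneg hT.le hK.le hγ hγαβ (α := α)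
  refine ⟨holderTail C (holderMomentBound T α β γ K) α, fun M _ => holderTail_mem_Icc hC.le hB α M,
    tendsto_holderTail _ _ hα, fun n _ Ω _ μ _ X hX hmom hsup => ?_⟩
  let Y : ℝ → Ω → EuclideanSpace ℝ (Fin n) := fun t ω => WithLp.toLp 2 (X t ω)
  have hYm : ∀ t, Measurable (Y t) := fun t => (PiLp.continuous_toLp 2 _).measurable.comp (hX t)
  obtain ⟨Y', W, hmod, hWm, hW, hholder⟩ := exists_holder_modification (μ := μ) (Y := Y)
    hT.le hK.le hα hβ hγ hγαβ (fun s t => (hYm s).edist (hYm t)) fun s hs t ht => by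
      simpa only [Y, edist_dist, ← eNorm_sub_eq_dist,
        ENNReal.ofReal_rpow_of_nonneg (eNorm_nonneg _) hα.le] using hmom s hs t ht
  have hX0 : ∫⁻ ω, ENNReal.ofReal (eNorm (X 0 ω)) ∂μ ≤ ENNReal.ofReal C :=
    (lintegral_mono fun ω => le_iSup₂ (f := fun t (_ : t ∈ Set.Icc 0 T ∩ dyadics) =>
      ENNReal.ofReal (eNorm (X t ω))) 0 ⟨⟨le_rfl, hT.le⟩, 0, 0, by simp⟩).trans hsup
  refine ⟨fun t ω => (Y' t ω).ofLp, fun t ht => ?_, ?_, fun M _ => ?_⟩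
  · filter_upwards [hmod t ht] with ω h
    simp [h, Y]
  · filter_upwards [ae_ne_top_of_lintegral_rpow_ne_top hWm hα (ne_top_of_le_ne_top
      ENNReal.ofReal_ne_top hW)] with ω hω
    simpa only [eNorm_sub_eq_dist, WithLp.toLp_ofLp] using ⟨_, dist_le_of_edist_le hω (hholder ω)⟩
  · refine (measure_mono_ae ?_).trans (measure_lt_add_le_holderTail
      (continuous_eNorm.measurable.comp (hX 0)).ennreal_ofReal.aemeasurable hWm.aemeasurable
      hC.le hB hα hX0 hW)
    filter_upwards [hmod 0 ⟨le_rfl, hT.le⟩] with ω h0 hω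
    simp only [eNorm_sub_eq_dist, WithLp.toLp_ofLp] at hω
    exact hω.trans_le (add_le_add (by simp [h0, Y]) (iSup_ofReal_dist_div_rpow_le (hholder ω)))
end

section
/- Assume additionally that h is locally Lipschitz and that for each i = 1, …, d the partial derivative ∂h/∂x_i exists everywhere on ℝ^m and is locally Lipschitz. Then h̃ is locally Lipschitz on [0,∞) × ℝ^m. -/
open Set

open Metric in
lemma aux_compact_lip {E F : Type*} [NormedAddCommGroup E] [NormedAddCommGroup F]
    {f : E → F} (hf : LocallyLipschitz f) {K : Set E} (hK : IsCompact K) :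
    ∃ C : ℝ, 0 ≤ C ∧ (∀ x ∈ K, ‖f x‖ ≤ C) ∧
      ∀ x ∈ K, ∀ y ∈ K, ‖f x - f y‖ ≤ C * ‖x - y‖ := by
  rcases K.eq_empty_or_nonempty with rfl | hne
  · exact ⟨0, le_refl _, by simp, by simp⟩
  have hfc : Continuous f := hf.continuous
  choose Kc t ht hl using hf
  have hball : ∀ x : E, ∃ ε > 0, ball x ε ⊆ t x := fun x => Metric.mem_nhds_iff.1 (ht x)
  choose ε hε hsub using hball
  obtain ⟨T, hTK, hTcover⟩ := hK.elim_nhds_subcover (fun x => ball x (ε x / 2))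
    (fun x _ => ball_mem_nhds x (half_pos (hε x)))
  have hTne : T.Nonempty := by
    obtain ⟨x, hx⟩ := hne
    obtain ⟨j, hj, _⟩ := Set.mem_iUnion₂.1 (hTcover hx)
    exact ⟨j, hj⟩
  set δ : ℝ := T.inf' hTne (fun j => ε j / 2) with hδdef
  have hδpos : 0 < δ := by
    rw [hδdef, Finset.lt_inf'_iff]
    intro j _; exact half_pos (hε j)
  obtain ⟨M, hM⟩ := hK.exists_bound_of_continuousOn hfc.continuousOn
  set M' : ℝ := max M 0 with hM'def
  have hM'0 : 0 ≤ M' := le_max_right _ _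
  set C₁ : ℝ := T.sup' hTne (fun j => (Kc j : ℝ)) with hC₁def
  set C : ℝ := max (max C₁ (2 * M' / δ)) M' with hCdef
  have hCM' : M' ≤ C := le_max_right _ _
  have hC0 : 0 ≤ C := le_trans hM'0 hCM'
  refine ⟨C, hC0, fun x hx => le_trans (le_trans (hM x hx) (le_max_left _ _)) hCM', ?_⟩
  intro x hx y hy
  by_cases hd : ‖x - y‖ < δ
  · obtain ⟨j, hj, hxj⟩ := Set.mem_iUnion₂.1 (hTcover hx)
    have hδj : δ ≤ ε j / 2 := Finset.inf'_le _ hj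
    have hxball : x ∈ ball j (ε j) := by
      refine mem_ball.2 (lt_of_lt_of_le (mem_ball.1 hxj) (by linarith))
    have hyball : y ∈ ball j (ε j) := by
      have : dist y j ≤ dist y x + dist x j := dist_triangle _ _ _
      have h1 : dist y x < δ := by rwa [dist_comm, dist_eq_norm]
      have h2 : dist x j < ε j / 2 := mem_ball.1 hxj
      exact mem_ball.2 (by linarith)
    have := (lipschitzOnWith_iff_dist_le_mul.1 (hl j)) x (hsub j hxball) y (hsub j hyball)
    have hKC : (Kc j : ℝ) ≤ C :=
      le_trans (Finset.le_sup' (fun j => (Kc j : ℝ)) hj) (le_trans (le_max_left _ _) (le_max_left _ _))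
    rw [dist_eq_norm, dist_eq_norm] at this
    calc ‖f x - f y‖ ≤ (Kc j : ℝ) * ‖x - y‖ := this
      _ ≤ C * ‖x - y‖ := by
          exact mul_le_mul_of_nonneg_right hKC (norm_nonneg _)
  · push_neg at hd
    have h2M : ‖f x - f y‖ ≤ 2 * M' := by
      calc ‖f x - f y‖ ≤ ‖f x‖ + ‖f y‖ := norm_sub_le _ _
        _ ≤ M' + M' := add_le_add (le_trans (hM x hx) (le_max_left _ _))
            (le_trans (hM y hy) (le_max_left _ _))
        _ = 2 * M' := by ring
    have : 2 * M' ≤ (2 * M' / δ) * ‖x - y‖ := by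
      rw [div_mul_eq_mul_div, le_div_iff₀ hδpos]
      exact mul_le_mul_of_nonneg_left hd (by positivity)
    calc ‖f x - f y‖ ≤ (2 * M' / δ) * ‖x - y‖ := le_trans h2M this
      _ ≤ C * ‖x - y‖ := mul_le_mul_of_nonneg_right
          (le_trans (le_max_right _ _) (le_max_left _ _)) (norm_nonneg _)

lemma aux_mvt {E : Type*} [NormedAddCommGroup E] [NormedSpace ℝ E] {f f' : ℝ → E} {a b C : ℝ}
    (hab : a ≤ b) (hd : ∀ u ∈ Icc a b, HasDerivAt f (f' u) u)
    (hb : ∀ u ∈ Ico a b, ‖f' u‖ ≤ C) :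
    ‖f b - f a‖ ≤ C * (b - a) :=
  norm_image_sub_le_of_norm_deriv_le_segment'
    (fun u hu => (hd u hu).hasDerivWithinAt) hb b (right_mem_Icc.2 hab)

lemma aux_divdiff {E X : Type*} [NormedAddCommGroup E] [NormedSpace ℝ E] [NormedAddCommGroup X]
    {R Kl : ℝ} (hKl : 0 ≤ Kl) {s : Set X}
    (G D : ℝ → X → E)
    (hG0 : ∀ x ∈ s, G 0 x = 0)
    (hder : ∀ x ∈ s, ∀ t : ℝ, HasDerivAt (fun u => G u x) (D t x) t)
    (hlipD : ∀ t ∈ Icc (0:ℝ) R, ∀ t' ∈ Icc (0:ℝ) R, ∀ x ∈ s, ∀ x' ∈ s,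
      ‖D t x - D t' x'‖ ≤ Kl * (|t - t'| + ‖x - x'‖)) :
    ∀ t ∈ Icc (0:ℝ) R, ∀ t' ∈ Icc (0:ℝ) R, ∀ x ∈ s, ∀ x' ∈ s,
      ‖(if t = 0 then D 0 x else t⁻¹ • G t x) - (if t' = 0 then D 0 x' else t'⁻¹ • G t' x')‖
        ≤ 2 * Kl * (|t - t'| + ‖x - x'‖) := by
  intro t ht t' ht' x hx x' hx'
  have hR : (0:ℝ) ≤ R := le_trans ht.1 ht.2
  have h0R : (0:ℝ) ∈ Icc (0:ℝ) R := ⟨le_refl _, hR⟩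
  -- step0
  have step0 : ∀ x ∈ s, ∀ t ∈ Icc (0:ℝ) R, ‖G t x - t • D 0 x‖ ≤ Kl * t * t := by
    intro x hx t ht
    have key := aux_mvt (f := fun u => G u x - u • D 0 x) (f' := fun u => D u x - D 0 x)
      (a := 0) (b := t) (C := Kl * t) ht.1
      (fun u hu => ((hder x hx u).sub (((hasDerivAt_id u).smul_const (D 0 x)).congr_deriv
        (one_smul ℝ _))))
      (fun u hu => by
        have := hlipD u (⟨hu.1, le_trans (le_of_lt hu.2) ht.2⟩) 0 h0R x hx x hx
        simp only [sub_self, norm_zero, add_zero, sub_zero] at this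
        rw [abs_of_nonneg hu.1] at this
        exact le_trans this (by nlinarith [hu.1, le_of_lt hu.2]))
    simpa [hG0 x hx] using key
  -- step1
  have step1 : ∀ x ∈ s, ∀ x' ∈ s, ∀ t ∈ Icc (0:ℝ) R,
      ‖G t x - G t x'‖ ≤ Kl * ‖x - x'‖ * t := by
    intro x hx x' hx' t ht
    have key := aux_mvt (f := fun u => G u x - G u x') (f' := fun u => D u x - D u x')
      (a := 0) (b := t) (C := Kl * ‖x - x'‖) ht.1
      (fun u hu => ((hder x hx u).sub (hder x' hx' u)))
      (fun u hu => by
        have := hlipD u (⟨hu.1, le_trans (le_of_lt hu.2) ht.2⟩) u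
          (⟨hu.1, le_trans (le_of_lt hu.2) ht.2⟩) x hx x' hx'
        simpa using this)
    simpa [hG0 x hx, hG0 x' hx'] using key
  -- step2
  have step2 : ∀ x ∈ s, ∀ t' t : ℝ, 0 ≤ t' → t' ≤ t → t ≤ R →
      ‖G t x - G t' x - (t - t') • D t' x‖ ≤ Kl * (t - t') * (t - t') := by
    intro x hx t' t h0 htt hR'
    have key := aux_mvt (f := fun u => G u x - u • D t' x) (f' := fun u => D u x - D t' x)
      (a := t') (b := t) (C := Kl * (t - t')) htt
      (fun u hu => ((hder x hx u).sub (((hasDerivAt_id u).smul_const (D t' x)).congr_deriv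
        (one_smul ℝ _))))
      (fun u hu => by
        have := hlipD u (⟨le_trans h0 hu.1, le_trans (le_of_lt hu.2) hR'⟩) t'
          ⟨h0, le_trans htt hR'⟩ x hx x hx
        simp only [sub_self, norm_zero, add_zero] at this
        rw [abs_of_nonneg (by linarith [hu.1] : (0:ℝ) ≤ u - t')] at this
        exact le_trans this (by nlinarith [hu.1, le_of_lt hu.2]))
    have : G t x - t • D t' x - (G t' x - t' • D t' x) = G t x - G t' x - (t - t') • D t' x := by
      rw [sub_smul]; abel
    rw [this] at key
    exact key
  -- (A) estimate in x
  have estA : ∀ t ∈ Icc (0:ℝ) R, ∀ x ∈ s, ∀ x' ∈ s,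
      ‖(if t = 0 then D 0 x else t⁻¹ • G t x) - (if t = 0 then D 0 x' else t⁻¹ • G t x')‖
        ≤ Kl * ‖x - x'‖ := by
    intro t ht x hx x' hx'
    by_cases h0 : t = 0
    · simp only [h0, if_pos rfl]
      have := hlipD 0 h0R 0 h0R x hx x' hx'
      simpa using this
    · simp only [if_neg h0]
      have htpos : 0 < t := lt_of_le_of_ne ht.1 (Ne.symm h0)
      rw [← smul_sub, norm_smul, norm_inv, Real.norm_eq_abs, abs_of_pos htpos]
      have := step1 x hx x' hx' t ht
      rw [inv_mul_le_iff₀ htpos]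
      calc ‖G t x - G t x'‖ ≤ Kl * ‖x - x'‖ * t := this
        _ = t * (Kl * ‖x - x'‖) := by ring
  -- (B) estimate in t (t' ≤ t)
  have estB : ∀ x ∈ s, ∀ t' t : ℝ, 0 ≤ t' → t' ≤ t → t ≤ R →
      ‖(if t = 0 then D 0 x else t⁻¹ • G t x) - (if t' = 0 then D 0 x else t'⁻¹ • G t' x)‖
        ≤ 2 * Kl * (t - t') := by
    intro x hx t' t h0 htt hR'
    by_cases ht0 : t = 0
    · have ht'0 : t' = 0 := le_antisymm (ht0 ▸ htt) h0
      simp [ht0, ht'0]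
    have htpos : 0 < t := lt_of_le_of_ne (le_trans h0 htt) (Ne.symm ht0)
    by_cases ht'0 : t' = 0
    · subst ht'0
      rw [if_neg ht0, if_pos rfl]
      have h1 : t⁻¹ • G t x - D 0 x = t⁻¹ • (G t x - t • D 0 x) := by
        rw [smul_sub, smul_smul, inv_mul_cancel₀ ht0, one_smul]
      rw [h1, norm_smul, norm_inv, Real.norm_eq_abs, abs_of_pos htpos]
      have := step0 x hx t ⟨le_of_lt htpos, hR'⟩
      rw [inv_mul_le_iff₀ htpos]
      calc ‖G t x - t • D 0 x‖ ≤ Kl * t * t := this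
        _ ≤ t * (2 * Kl * (t - 0)) := by nlinarith [mul_nonneg hKl (mul_nonneg htt htt)]
    · have ht'pos : 0 < t' := lt_of_le_of_ne h0 (Ne.symm ht'0)
      simp only [if_neg ht0, if_neg ht'0]
      have hkey : t⁻¹ • G t x - t'⁻¹ • G t' x
          = (t⁻¹ * t'⁻¹) • (t' • (G t x - G t' x - (t - t') • D t' x)
            + (t' * (t - t')) • (D t' x - D 0 x)
            + (t' - t) • (G t' x - t' • D 0 x)) := by
        match_scalars <;> field_simp <;> ring
      rw [hkey]
      have hn1 := step2 x hx t' t h0 htt hR'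
      have hn2 : ‖D t' x - D 0 x‖ ≤ Kl * t' := by
        have := hlipD t' ⟨h0, le_trans htt hR'⟩ 0 h0R x hx x hx
        simp only [sub_self, norm_zero, add_zero, sub_zero] at this
        rwa [abs_of_nonneg h0] at this
      have hn3 := step0 x hx t' ⟨h0, le_trans htt hR'⟩
      have hb1 : ‖t' • (G t x - G t' x - (t - t') • D t' x)‖
          ≤ t' * (Kl * (t - t') * (t - t')) := by
        rw [norm_smul, Real.norm_eq_abs, abs_of_nonneg h0]
        exact mul_le_mul_of_nonneg_left hn1 h0
      have hb2 : ‖(t' * (t - t')) • (D t' x - D 0 x)‖ ≤ (t' * (t - t')) * (Kl * t') := by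
        rw [norm_smul, Real.norm_eq_abs,
          abs_of_nonneg (mul_nonneg h0 (by linarith : (0:ℝ) ≤ t - t'))]
        exact mul_le_mul_of_nonneg_left hn2 (mul_nonneg h0 (by linarith))
      have hb3 : ‖(t' - t) • (G t' x - t' • D 0 x)‖ ≤ (t - t') * (Kl * t' * t') := by
        rw [norm_smul, Real.norm_eq_abs, abs_sub_comm,
          abs_of_nonneg (by linarith : (0:ℝ) ≤ t - t')]
        exact mul_le_mul_of_nonneg_left hn3 (by linarith)
      have hnorm : ‖t' • (G t x - G t' x - (t - t') • D t' x)
            + (t' * (t - t')) • (D t' x - D 0 x)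
            + (t' - t) • (G t' x - t' • D 0 x)‖
          ≤ Kl * (t - t') * (t' * (t - t') + 2 * t' * t') := by
        calc ‖_ + _ + _‖ ≤ _ + _ + _ := norm_add₃_le
          _ ≤ t' * (Kl * (t - t') * (t - t')) + (t' * (t - t')) * (Kl * t')
              + (t - t') * (Kl * t' * t') := add_le_add (add_le_add hb1 hb2) hb3
          _ = Kl * (t - t') * (t' * (t - t') + 2 * t' * t') := by ring
      rw [norm_smul, Real.norm_eq_abs, abs_of_pos (by positivity : (0:ℝ) < t⁻¹ * t'⁻¹)]
      calc (t⁻¹ * t'⁻¹) * ‖_‖ ≤ (t⁻¹ * t'⁻¹) * (Kl * (t - t') * (t' * (t - t') + 2 * t' * t')) := by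
            gcongr
        _ = t⁻¹ * (Kl * (t - t') * (t + t')) := by
            field_simp; ring
        _ ≤ 2 * Kl * (t - t') := by
            rw [inv_mul_le_iff₀ htpos]
            nlinarith [mul_nonneg hKl (sub_nonneg.2 htt)]
  -- assemble
  have tri := norm_sub_le_norm_sub_add_norm_sub
    (if t = 0 then D 0 x else t⁻¹ • G t x) (if t' = 0 then D 0 x else t'⁻¹ • G t' x)
    (if t' = 0 then D 0 x' else t'⁻¹ • G t' x')
  have hA := estA t' ht' x hx x' hx'
  have hB : ‖(if t = 0 then D 0 x else t⁻¹ • G t x)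
      - (if t' = 0 then D 0 x else t'⁻¹ • G t' x)‖ ≤ 2 * Kl * |t - t'| := by
    rcases le_total t' t with hc | hc
    · have := estB x hx t' t ht'.1 hc ht.2
      rwa [abs_of_nonneg (by linarith : (0:ℝ) ≤ t - t')]
    · have := estB x hx t t' ht.1 hc ht'.2
      rw [norm_sub_rev, abs_sub_comm, abs_of_nonneg (by linarith : (0:ℝ) ≤ t' - t)]
      exact this
  have hxx : (0:ℝ) ≤ ‖x - x'‖ := norm_nonneg _
  have habs : (0:ℝ) ≤ |t - t'| := abs_nonneg _
  calc ‖_ - _‖ ≤ _ + _ := tri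
    _ ≤ 2 * Kl * |t - t'| + Kl * ‖x - x'‖ := add_le_add hB hA
    _ ≤ 2 * Kl * (|t - t'| + ‖x - x'‖) := by nlinarith

/-- Projection of `ℝᵐ` onto its first `d` coordinates (extended by zero). -/
def piU (d : ℕ) {m : ℕ} (x : Fin m → ℝ) : Fin m → ℝ :=
  fun i => if (i : ℕ) < d then x i else 0

/-- Projection of `ℝᵐ` onto its last `m − d` coordinates (extended by zero). -/
def piZ (d : ℕ) {m : ℕ} (x : Fin m → ℝ) : Fin m → ℝ :=
  fun i => if (i : ℕ) < d then 0 else x i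

section piUZ
variable {d m : ℕ}

lemma piU_add (x y : Fin m → ℝ) : piU d (x + y) = piU d x + piU d y := by
  funext i; simp only [piU, Pi.add_apply]; split <;> simp

lemma piU_sub (x y : Fin m → ℝ) : piU d (x - y) = piU d x - piU d y := by
  funext i; simp only [piU, Pi.sub_apply]; split <;> simp

lemma piU_smul (c : ℝ) (x : Fin m → ℝ) : piU d (c • x) = c • piU d x := by
  funext i; simp only [piU, Pi.smul_apply, smul_eq_mul]; split <;> simp

lemma piZ_add (x y : Fin m → ℝ) : piZ d (x + y) = piZ d x + piZ d y := by
  funext i; simp only [piZ, Pi.add_apply]; split <;> simp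

lemma piZ_sub (x y : Fin m → ℝ) : piZ d (x - y) = piZ d x - piZ d y := by
  funext i; simp only [piZ, Pi.sub_apply]; split <;> simp

lemma piZ_smul (c : ℝ) (x : Fin m → ℝ) : piZ d (c • x) = c • piZ d x := by
  funext i; simp only [piZ, Pi.smul_apply, smul_eq_mul]; split <;> simp

lemma piU_piZ (x : Fin m → ℝ) : piU d (piZ d x) = 0 := by
  funext i; simp only [piU, piZ]; split <;> simp_all

lemma piZ_piU (x : Fin m → ℝ) : piZ d (piU d x) = 0 := by
  funext i; simp only [piU, piZ]; split <;> simp_all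

lemma piU_piU (x : Fin m → ℝ) : piU d (piU d x) = piU d x := by
  funext i; simp only [piU]; split <;> simp_all

lemma piZ_piZ (x : Fin m → ℝ) : piZ d (piZ d x) = piZ d x := by
  funext i; simp only [piZ]; split <;> simp_all

lemma norm_piU_le (x : Fin m → ℝ) : ‖piU d x‖ ≤ ‖x‖ := by
  rw [pi_norm_le_iff_of_nonneg (norm_nonneg x)]
  intro i
  simp only [piU]
  split
  · exact norm_le_pi_norm x i
  · simp

lemma norm_piZ_le (x : Fin m → ℝ) : ‖piZ d x‖ ≤ ‖x‖ := by
  rw [pi_norm_le_iff_of_nonneg (norm_nonneg x)]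
  intro i
  simp only [piZ]
  split
  · simp
  · exact norm_le_pi_norm x i

lemma piU_add_piZ (x : Fin m → ℝ) : piU d x + piZ d x = x := by
  funext i; simp only [piU, piZ, Pi.add_apply]; split <;> simp

/-- `piU` as a continuous linear map. -/
noncomputable def piUL (d m : ℕ) : (Fin m → ℝ) →L[ℝ] (Fin m → ℝ) :=
  LinearMap.toContinuousLinearMap
    { toFun := piU d
      map_add' := piU_add
      map_smul' := piU_smul }

@[simp] lemma piUL_apply (x : Fin m → ℝ) : piUL d m x = piU d x := rfl

end piUZ

/-- The blow-up `h̃(r,x)` of `h` : for `r > 0`,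
`h̃(r,x) = r⁻¹ π_u(h(r x_u, x_z)) + π_z(h(r x_u, x_z))`, and for `r = 0`,
`h̃(0,x) = π_u(D_u h(0, x_z)[x_u]) + h(0, x_z)`, where the derivative in the
first `d` variables is recorded by `Duh`. -/
noncomputable def tildeH (d : ℕ) {m : ℕ} (h : (Fin m → ℝ) → (Fin m → ℝ))
    (Duh : (Fin m → ℝ) → ((Fin m → ℝ) →L[ℝ] (Fin m → ℝ)))
    (r : ℝ) (x : Fin m → ℝ) : Fin m → ℝ :=
  if r = 0 then
    piU d (Duh (piZ d x) (piU d x)) + h (piZ d x)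
  else
    r⁻¹ • piU d (h (r • piU d x + piZ d x)) + piZ d (h (r • piU d x + piZ d x))

set_option maxHeartbeats 1000000 in
/-- if moreover `h` is locally Lipschitz and each partial derivative
`∂h/∂x_i`, `i = 1,…,d`, exists everywhere (recorded via the derivative `Duh` in
the first `d` variables) and is locally Lipschitz, then `h̃` is locally
Lipschitz on `[0,∞) × ℝᵐ`. -/
theorem stmt_5 (d m : ℕ) (hd : 1 ≤ d) (hdm : d ≤ m)
    (h : (Fin m → ℝ) → (Fin m → ℝ))
    (Duh : (Fin m → ℝ) → ((Fin m → ℝ) →L[ℝ] (Fin m → ℝ)))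
    (hzero : ∀ x : Fin m → ℝ, piU d (h (piZ d x)) = 0)
    (hderiv : ∀ x : Fin m → ℝ, HasFDerivAt (fun v => h (piU d v + piZ d x)) (Duh x) x)
    (hlip : LocallyLipschitz h)
    (hlip' : ∀ i : Fin m, (i : ℕ) < d →
      LocallyLipschitz (fun x : Fin m → ℝ => Duh x (Pi.single i 1))) :
    LocallyLipschitzOn (Set.Ici (0 : ℝ) ×ˢ Set.univ)
      (fun p : ℝ × (Fin m → ℝ) => tildeH d h Duh p.1 p.2) := by
  rintro ⟨r₀, x₀⟩ hp
  have hr₀ : 0 ≤ r₀ := hp.1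
  set R : ℝ := r₀ + 1 with hRdef
  have hRpos : 0 < R := by positivity
  set B : ℝ := ‖x₀‖ + 1 with hBdef
  have hBpos : 0 < B := by positivity
  set s : Set (Fin m → ℝ) := Metric.closedBall x₀ 1 with hsdef
  set RY : ℝ := R * B + B with hRYdef
  have hYcomp : IsCompact (Metric.closedBall (0 : Fin m → ℝ) RY) := isCompact_closedBall _ _
  set Y : Set (Fin m → ℝ) := Metric.closedBall (0 : Fin m → ℝ) RY with hYdef
  have hxB : ∀ x ∈ s, ‖x‖ ≤ B := by
    intro x hx
    have h1 : ‖x - x₀‖ ≤ 1 := by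
      rw [← dist_eq_norm]; exact Metric.mem_closedBall.1 hx
    calc ‖x‖ = ‖x - x₀ + x₀‖ := by ring_nf
      _ ≤ ‖x - x₀‖ + ‖x₀‖ := norm_add_le _ _
      _ ≤ B := by rw [hBdef]; linarith
  have heY : ∀ t ∈ Icc (0:ℝ) R, ∀ x ∈ s, (t • piU d x + piZ d x) ∈ Y := by
    intro t ht x hx
    rw [hYdef, Metric.mem_closedBall, dist_zero_right]
    calc ‖t • piU d x + piZ d x‖ ≤ ‖t • piU d x‖ + ‖piZ d x‖ := norm_add_le _ _
      _ ≤ |t| * ‖piU d x‖ + ‖x‖ := by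
          rw [norm_smul, Real.norm_eq_abs]; gcongr; exact norm_piZ_le x
      _ ≤ R * B + B := by
          rw [abs_of_nonneg ht.1]
          have h1 : ‖piU d x‖ ≤ B := le_trans (norm_piU_le x) (hxB x hx)
          have h2 : ‖x‖ ≤ B := hxB x hx
          have := ht.2
          nlinarith [norm_nonneg (piU d x), ht.1]
  -- constants for the columns of Duh
  have hCex : ∀ i : Fin m, ∃ C : ℝ, 0 ≤ C ∧ ((i : ℕ) < d →
      (∀ y ∈ Y, ‖Duh y (Pi.single i 1)‖ ≤ C) ∧
      ∀ y ∈ Y, ∀ y' ∈ Y, ‖Duh y (Pi.single i 1) - Duh y' (Pi.single i 1)‖ ≤ C * ‖y - y'‖) := by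
    intro i
    by_cases hi : (i : ℕ) < d
    · obtain ⟨C, hC0, hCb, hCl⟩ := aux_compact_lip (hlip' i hi) hYcomp
      exact ⟨C, hC0, fun _ => ⟨hCb, hCl⟩⟩
    · exact ⟨0, le_refl _, fun hcon => absurd hcon hi⟩
  choose C hC0 hCspec using hCex
  set S : ℝ := ∑ i : Fin m, C i with hSdef
  have hS0 : 0 ≤ S := Finset.sum_nonneg fun i _ => hC0 i
  set Q : ℝ := B * B + B * (R + 1) + 1 with hQdef
  have hQ0 : 0 < Q := by positivity
  set K₀ : ℝ := S * Q with hK₀def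
  have hK₀0 : 0 ≤ K₀ := mul_nonneg hS0 (le_of_lt hQ0)
  -- expansion of Duh
  have hexp : ∀ y v : Fin m → ℝ, Duh y v = ∑ i : Fin m, v i • Duh y (Pi.single i 1) := by
    intro y v
    conv_lhs => rw [← Finset.univ_sum_single v]
    rw [map_sum]
    refine Finset.sum_congr rfl fun i _ => ?_
    rw [← map_smul]
    congr 1
    rw [← Pi.single_smul, smul_eq_mul, mul_one]
  set Gf : ℝ → (Fin m → ℝ) → (Fin m → ℝ) :=
    fun t x => piU d (h (t • piU d x + piZ d x)) with hGfdef
  set Df : ℝ → (Fin m → ℝ) → (Fin m → ℝ) :=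
    fun t x => piU d (Duh (t • piU d x + piZ d x) (piU d x)) with hDfdef
  -- distance between base points
  have hyy' : ∀ t ∈ Icc (0:ℝ) R, ∀ t' ∈ Icc (0:ℝ) R, ∀ x ∈ s, ∀ x' ∈ s,
      ‖(t • piU d x + piZ d x) - (t' • piU d x' + piZ d x')‖
        ≤ B * |t - t'| + (R + 1) * ‖x - x'‖ := by
    intro t ht t' ht' x hx x' hx'
    have hsplit : (t • piU d x + piZ d x) - (t' • piU d x' + piZ d x')
        = (t - t') • piU d x + t' • (piU d x - piU d x') + (piZ d x - piZ d x') := by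
      module
    rw [hsplit, ← piU_sub, ← piZ_sub]
    calc ‖(t - t') • piU d x + t' • piU d (x - x') + piZ d (x - x')‖
        ≤ ‖(t - t') • piU d x‖ + ‖t' • piU d (x - x')‖ + ‖piZ d (x - x')‖ := norm_add₃_le
      _ ≤ |t - t'| * B + R * ‖x - x'‖ + ‖x - x'‖ := by
          rw [norm_smul, norm_smul, Real.norm_eq_abs, Real.norm_eq_abs]
          have h1 : ‖piU d x‖ ≤ B := le_trans (norm_piU_le x) (hxB x hx)
          have h2 : ‖piU d (x - x')‖ ≤ ‖x - x'‖ := norm_piU_le _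
          have h3 : ‖piZ d (x - x')‖ ≤ ‖x - x'‖ := norm_piZ_le _
          have h4 : |t'| ≤ R := by rw [abs_of_nonneg ht'.1]; exact ht'.2
          gcongr <;> first | exact abs_nonneg _ | skip
      _ = B * |t - t'| + (R + 1) * ‖x - x'‖ := by ring
  -- joint Lipschitz bound for Df
  have hlipD : ∀ t ∈ Icc (0:ℝ) R, ∀ t' ∈ Icc (0:ℝ) R, ∀ x ∈ s, ∀ x' ∈ s,
      ‖Df t x - Df t' x'‖ ≤ K₀ * (|t - t'| + ‖x - x'‖) := by
    intro t ht t' ht' x hx x' hx'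
    set y := t • piU d x + piZ d x with hydef
    set y' := t' • piU d x' + piZ d x' with hy'def
    have hyY : y ∈ Y := heY t ht x hx
    have hy'Y : y' ∈ Y := heY t' ht' x' hx'
    have hyn : ‖y - y'‖ ≤ B * |t - t'| + (R + 1) * ‖x - x'‖ := hyy' t ht t' ht' x hx x' hx'
    have hterm : ∀ i : Fin m,
        ‖piU d x i • Duh y (Pi.single i 1) - piU d x' i • Duh y' (Pi.single i 1)‖
          ≤ C i * (B * ‖y - y'‖ + ‖x - x'‖) := by
      intro i
      by_cases hi : (i : ℕ) < d
      · obtain ⟨hCb, hCl⟩ := hCspec i hi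
        have hxi : piU d x i = x i := by simp [piU, hi]
        have hxi' : piU d x' i = x' i := by simp [piU, hi]
        rw [hxi, hxi']
        have hdecomp : x i • Duh y (Pi.single i 1) - x' i • Duh y' (Pi.single i 1)
            = x i • (Duh y (Pi.single i 1) - Duh y' (Pi.single i 1))
              + (x i - x' i) • Duh y' (Pi.single i 1) := by module
        rw [hdecomp]
        calc ‖_ + _‖ ≤ ‖x i • (Duh y (Pi.single i 1) - Duh y' (Pi.single i 1))‖
              + ‖(x i - x' i) • Duh y' (Pi.single i 1)‖ := norm_add_le _ _
          _ ≤ B * (C i * ‖y - y'‖) + ‖x - x'‖ * C i := by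
              rw [norm_smul, norm_smul, Real.norm_eq_abs, Real.norm_eq_abs]
              have h1 : |x i| ≤ B := le_trans (norm_le_pi_norm x i) (hxB x hx)
              have h2 : |x i - x' i| ≤ ‖x - x'‖ := by
                have := norm_le_pi_norm (x - x') i
                simpa using this
              gcongr <;> first
                | exact abs_nonneg _
                | exact hCl y hyY y' hy'Y
                | exact hCb y' hy'Y
          _ = C i * (B * ‖y - y'‖ + ‖x - x'‖) := by ring
      · have hxi : piU d x i = 0 := by simp [piU, hi]
        have hxi' : piU d x' i = 0 := by simp [piU, hi]
        rw [hxi, hxi']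
        simp only [zero_smul, sub_zero, norm_zero]
        exact mul_nonneg (hC0 i) (by positivity)
    calc ‖Df t x - Df t' x'‖
        = ‖piU d (Duh y (piU d x) - Duh y' (piU d x'))‖ := by
          rw [hDfdef]; simp only [← hydef, ← hy'def]; rw [piU_sub]
      _ ≤ ‖Duh y (piU d x) - Duh y' (piU d x')‖ := norm_piU_le _
      _ = ‖∑ i : Fin m, (piU d x i • Duh y (Pi.single i 1)
            - piU d x' i • Duh y' (Pi.single i 1))‖ := by
          rw [hexp y (piU d x), hexp y' (piU d x'), ← Finset.sum_sub_distrib]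
      _ ≤ ∑ i : Fin m, ‖piU d x i • Duh y (Pi.single i 1)
            - piU d x' i • Duh y' (Pi.single i 1)‖ := norm_sum_le _ _
      _ ≤ ∑ i : Fin m, C i * (B * ‖y - y'‖ + ‖x - x'‖) :=
          Finset.sum_le_sum fun i _ => hterm i
      _ = S * (B * ‖y - y'‖ + ‖x - x'‖) := by rw [hSdef, Finset.sum_mul]
      _ ≤ K₀ * (|t - t'| + ‖x - x'‖) := by
          rw [hK₀def]
          have ha : (0:ℝ) ≤ |t - t'| := abs_nonneg _
          have hb : (0:ℝ) ≤ ‖x - x'‖ := norm_nonneg _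
          have hyn0 : (0:ℝ) ≤ ‖y - y'‖ := norm_nonneg _
          have step : B * ‖y - y'‖ + ‖x - x'‖ ≤ Q * (|t - t'| + ‖x - x'‖) := by
            have : B * ‖y - y'‖ ≤ B * (B * |t - t'| + (R + 1) * ‖x - x'‖) := by gcongr
            rw [hQdef]; nlinarith [mul_nonneg (le_of_lt hBpos) ha,
              mul_nonneg (le_of_lt hBpos) hb]
          calc S * (B * ‖y - y'‖ + ‖x - x'‖) ≤ S * (Q * (|t - t'| + ‖x - x'‖)) := by gcongr
            _ = S * Q * (|t - t'| + ‖x - x'‖) := by ring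
  -- derivative of Gf in t
  have hderG : ∀ x ∈ s, ∀ t : ℝ, HasDerivAt (fun u => Gf u x) (Df t x) t := by
    intro x _ t
    have hγ : HasDerivAt (fun u : ℝ => u • piU d x + piZ d x) (piU d x) t := by
      have h1 : HasDerivAt (fun u : ℝ => u • piU d x) ((1:ℝ) • piU d x) t :=
        (hasDerivAt_id t).smul_const (piU d x)
      rw [one_smul] at h1
      exact h1.add_const (piZ d x)
    set y := t • piU d x + piZ d x with hydef
    have hpz : piZ d y = piZ d x := by
      rw [hydef, piZ_add, piZ_smul, piZ_piU, smul_zero, zero_add, piZ_piZ]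
    have hf : HasFDerivAt (fun v => h (piU d v + piZ d x)) (Duh y) y := by
      have := hderiv y
      rwa [hpz] at this
    have hcomp := hf.comp_hasDerivAt t hγ
    have hfun : ∀ u : ℝ, piU d (u • piU d x + piZ d x) + piZ d x
        = u • piU d x + piZ d x := by
      intro u
      rw [piU_add, piU_smul, piU_piU, piU_piZ, add_zero]
    simp only [Function.comp_def, hfun] at hcomp
    have hfinal := (piUL d m).hasFDerivAt.comp_hasDerivAt t hcomp
    simp only [Function.comp_def, piUL_apply] at hfinal
    exact hfinal
  -- Gf vanishes at 0
  have hG0 : ∀ x ∈ s, Gf 0 x = 0 := by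
    intro x _
    rw [hGfdef]
    simp only [zero_smul, zero_add]
    exact hzero x
  -- divided difference estimate
  have hΦ := aux_divdiff hK₀0 Gf Df hG0 hderG hlipD
  -- Lipschitz bound for h on Y
  obtain ⟨Ch, hCh0, _, hChl⟩ := aux_compact_lip hlip hYcomp
  -- the function agrees with Φ + Ψ
  have hfeq : ∀ t ∈ Icc (0:ℝ) R, ∀ x : Fin m → ℝ, tildeH d h Duh t x
      = (if t = 0 then Df 0 x else t⁻¹ • Gf t x) + piZ d (h (t • piU d x + piZ d x)) := by
    intro t _ x
    by_cases ht0 : t = 0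
    · subst ht0
      rw [tildeH, if_pos rfl, if_pos rfl]
      have he0 : (0:ℝ) • piU d x + piZ d x = piZ d x := by rw [zero_smul, zero_add]
      rw [hDfdef]
      simp only [he0]
      congr 1
      have hw := piU_add_piZ (d := d) (h (piZ d x))
      rw [hzero x, zero_add] at hw
      exact hw.symm
    · rw [tildeH, if_neg ht0, if_neg ht0]
  -- final constant
  set Kfin : ℝ := 4 * K₀ + 2 * Ch * (B + R + 1) with hKfindef
  have hKfin0 : 0 ≤ Kfin := by positivity
  refine ⟨Kfin.toNNReal, (Icc (0:ℝ) R) ×ˢ s, ?_, ?_⟩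
  · rw [nhdsWithin_prod_eq]
    refine Filter.prod_mem_prod ?_ ?_
    · refine mem_nhdsWithin.2 ⟨Iio R, isOpen_Iio, mem_Iio.2 (by rw [hRdef]; linarith), ?_⟩
      rintro u ⟨hu1, hu2⟩
      exact ⟨hu2, le_of_lt hu1⟩
    · rw [nhdsWithin_univ]
      exact Metric.closedBall_mem_nhds x₀ one_pos
  · rw [lipschitzOnWith_iff_dist_le_mul]
    rintro ⟨t, x⟩ hpx ⟨t', x'⟩ hpx'
    obtain ⟨ht, hx⟩ := hpx
    obtain ⟨ht', hx'⟩ := hpx'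
    simp only at ht hx ht' hx'
    rw [dist_eq_norm]
    have heq1 := hfeq t ht x
    have heq2 := hfeq t' ht' x'
    simp only [heq1, heq2]
    have hsplit : ((if t = 0 then Df 0 x else t⁻¹ • Gf t x) + piZ d (h (t • piU d x + piZ d x)))
        - ((if t' = 0 then Df 0 x' else t'⁻¹ • Gf t' x') + piZ d (h (t' • piU d x' + piZ d x')))
        = ((if t = 0 then Df 0 x else t⁻¹ • Gf t x) - (if t' = 0 then Df 0 x' else t'⁻¹ • Gf t' x'))
          + (piZ d (h (t • piU d x + piZ d x)) - piZ d (h (t' • piU d x' + piZ d x'))) := by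
      abel
    rw [hsplit]
    have hbound1 := hΦ t ht t' ht' x hx x' hx'
    have hbound2 : ‖piZ d (h (t • piU d x + piZ d x)) - piZ d (h (t' • piU d x' + piZ d x'))‖
        ≤ Ch * (B * |t - t'| + (R + 1) * ‖x - x'‖) := by
      rw [← piZ_sub]
      calc ‖piZ d (h (t • piU d x + piZ d x) - h (t' • piU d x' + piZ d x'))‖
          ≤ ‖h (t • piU d x + piZ d x) - h (t' • piU d x' + piZ d x')‖ := norm_piZ_le _
        _ ≤ Ch * ‖(t • piU d x + piZ d x) - (t' • piU d x' + piZ d x')‖ :=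
            hChl _ (heY t ht x hx) _ (heY t' ht' x' hx')
        _ ≤ Ch * (B * |t - t'| + (R + 1) * ‖x - x'‖) := by
            gcongr
            exact hyy' t ht t' ht' x hx x' hx'
    have hdistt : |t - t'| ≤ dist (t, x) (t', x') := by
      rw [Prod.dist_eq]
      exact le_trans (le_of_eq (Real.dist_eq t t').symm) (le_max_left _ _)
    have hdistx : ‖x - x'‖ ≤ dist (t, x) (t', x') := by
      rw [Prod.dist_eq]
      exact le_trans (le_of_eq (dist_eq_norm x x').symm) (le_max_right _ _)
    have hdist0 : (0:ℝ) ≤ dist (t, x) (t', x') := dist_nonneg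
    have hcoe : (Kfin.toNNReal : ℝ) = Kfin := Real.coe_toNNReal _ hKfin0
    rw [hcoe]
    calc ‖_ + _‖ ≤ ‖(if t = 0 then Df 0 x else t⁻¹ • Gf t x)
          - (if t' = 0 then Df 0 x' else t'⁻¹ • Gf t' x')‖
          + ‖piZ d (h (t • piU d x + piZ d x)) - piZ d (h (t' • piU d x' + piZ d x'))‖ :=
        norm_add_le _ _
      _ ≤ 2 * K₀ * (|t - t'| + ‖x - x'‖) + Ch * (B * |t - t'| + (R + 1) * ‖x - x'‖) :=
        add_le_add hbound1 hbound2
      _ ≤ Kfin * dist (t, x) (t', x') := by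
        rw [hKfindef]
        have ha : (0:ℝ) ≤ |t - t'| := abs_nonneg _
        have hb : (0:ℝ) ≤ ‖x - x'‖ := norm_nonneg _
        nlinarith [mul_nonneg hK₀0 (sub_nonneg.2 hdistt), mul_nonneg hK₀0 (sub_nonneg.2 hdistx),
          mul_nonneg (mul_nonneg hCh0 (le_of_lt hBpos)) (sub_nonneg.2 hdistt),
          mul_nonneg (mul_nonneg hCh0 (by positivity : (0:ℝ) ≤ R + 1)) (sub_nonneg.2 hdistx),
          mul_nonneg hCh0 hdist0, mul_nonneg hK₀0 hdist0]
end

section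
/- Let S be a set, let k ≥ 1 and K > 0 be real numbers, and let W : S → [1,∞), W' : S → [1,∞], G : S → [0,∞) and L : S → ℝ ∪ {−∞} be functions such that: (a) L(x) ≤ K − W'(x) for all x ∈ S; (b) for every ε > 0 there exists N > 0 such that G(x)/W(x) ≤ N + ε·W'(x) for all x ∈ S; (c) for every c > 0, sup{ W(x) : x ∈ S, W'(x) ≤ c } < ∞. Then there exists K' > 0 such that for all x ∈ S: k·W(x)^{k−1}·L(x) + (1/2)·k·(k−1)·W(x)^{k−2}·G(x) ≤ K' − (k/4)·W(x)^{k−1}·W'(x), and k²·W(x)^{2k−2}·G(x) ≤ K' + k²·W(x)^{2k−1}·W'(x). -/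
/-- Auxiliary: bounding `A * W^p` by `K' + c * (W^p * r)` on finite values of `W'`. -/
lemma stmt_7_aux {S : Type*} (W : S → ℝ) (hW : ∀ x, 1 ≤ W x) (W' : S → EReal)
    (hc : ∀ c : ℝ, 0 < c → ∃ B : ℝ, ∀ x, W' x ≤ (c : EReal) → W x ≤ B)
    (A c p : ℝ) (hA : 0 ≤ A) (hcpos : 0 < c) (hp : 0 ≤ p) :
    ∃ K' : ℝ, 0 < K' ∧ ∀ x (r : ℝ), 1 ≤ r → W' x = (r : EReal) →
      A * W x ^ p ≤ K' + c * (W x ^ p * r) := by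
  obtain ⟨B, hB⟩ := hc (A / c + 1) (by positivity)
  refine ⟨A * (max B 1) ^ p + 1, by positivity, ?_⟩
  intro x r hr hx
  have hW0 : (0:ℝ) ≤ W x := le_trans zero_le_one (hW x)
  have hwp : 0 ≤ W x ^ p := Real.rpow_nonneg hW0 p
  have hBp : (0:ℝ) ≤ A * (max B 1) ^ p :=
    mul_nonneg hA (Real.rpow_nonneg (le_trans zero_le_one (le_max_right B 1)) p)
  by_cases hcase : r ≤ A / c + 1
  · have hWB : W x ≤ max B 1 := by
      refine le_trans (hB x ?_) (le_max_left _ _)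
      rw [hx]; exact_mod_cast hcase
    have h1 : W x ^ p ≤ (max B 1) ^ p := Real.rpow_le_rpow hW0 hWB hp
    have h2 : A * W x ^ p ≤ A * (max B 1) ^ p := mul_le_mul_of_nonneg_left h1 hA
    nlinarith [mul_nonneg (mul_nonneg hcpos.le hwp) (le_trans zero_le_one hr)]
  · push_neg at hcase
    have hAcr : A ≤ c * r := by
      have := (div_lt_iff₀ hcpos).mp (by linarith : A / c < r)
      linarith
    have h3 : A * W x ^ p ≤ (c * r) * W x ^ p := mul_le_mul_of_nonneg_right hAcr hwp
    nlinarith [h3, hBp]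

/-- an extended-real Lyapunov inequality.  If `L ≤ K − W'`, `G/W`
vanishes over `W'`, and `W` is bounded on sublevel sets of `W'`, then there is
`K' > 0` with `k W^{k−1} L + ½ k(k−1) W^{k−2} G ≤ K' − (k/4) W^{k−1} W'` and
`k² W^{2k−2} G ≤ K' + k² W^{2k−1} W'`.  Here `W' : S → [1,∞]` and
`L : S → ℝ ∪ {−∞}` are modelled as `EReal`-valued functions. -/
theorem stmt_7 {S : Type*} (k K : ℝ) (hk : 1 ≤ k) (hK : 0 < K)
    (W : S → ℝ) (hW : ∀ x, 1 ≤ W x)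
    (W' : S → EReal) (hW' : ∀ x, (1 : EReal) ≤ W' x)
    (G : S → ℝ) (hG : ∀ x, 0 ≤ G x)
    (L : S → EReal) (hLne : ∀ x, L x ≠ ⊤)
    (ha : ∀ x, L x ≤ (K : EReal) - W' x)
    (hb : ∀ ε : ℝ, 0 < ε → ∃ N : ℝ, 0 < N ∧ ∀ x,
      ((G x / W x : ℝ) : EReal) ≤ (N : EReal) + (ε : EReal) * W' x)
    (hc : ∀ c : ℝ, 0 < c → ∃ B : ℝ, ∀ x, W' x ≤ (c : EReal) → W x ≤ B) :
    ∃ K' : ℝ, 0 < K' ∧ ∀ x,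
      (((k * W x ^ (k - 1) : ℝ) : EReal) * L x
          + ((1 / 2 * k * (k - 1) * W x ^ (k - 2) * G x : ℝ) : EReal)
        ≤ (K' : EReal) - ((k / 4 * W x ^ (k - 1) : ℝ) : EReal) * W' x)
      ∧ ((k ^ 2 * W x ^ (2 * k - 2) * G x : ℝ) : EReal)
        ≤ (K' : EReal) + ((k ^ 2 * W x ^ (2 * k - 1) : ℝ) : EReal) * W' x := by
  have hk0 : 0 < k := lt_of_lt_of_le one_pos hk
  set D : ℝ := 1 / 2 * k * (k - 1) with hD
  have hD0 : 0 ≤ D := by nlinarith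
  set ε₁ : ℝ := k / (4 * (D + 1)) with hε₁
  have hε₁pos : 0 < ε₁ := by positivity
  have hDε : D * ε₁ ≤ k / 4 := by
    rw [hε₁, ← mul_div_assoc, div_le_div_iff₀ (by positivity) (by norm_num)]
    nlinarith
  obtain ⟨N₁, hN₁, hb1⟩ := hb ε₁ hε₁pos
  obtain ⟨N₂, hN₂, hb2⟩ := hb (1/2) (by norm_num)
  obtain ⟨K₁, hK₁pos, hK₁⟩ := stmt_7_aux W hW W' hc (k * K + D * N₁) (k / 2) (k - 1)
    (by positivity) (by positivity) (by linarith)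
  obtain ⟨K₂, hK₂pos, hK₂⟩ := stmt_7_aux W hW W' hc (k ^ 2 * N₂) (k ^ 2 / 2) (2 * k - 1)
    (by positivity) (by positivity) (by linarith)
  refine ⟨K₁ + K₂, by linarith, fun x => ?_⟩
  have hWx0 : (0:ℝ) < W x := lt_of_lt_of_le one_pos (hW x)
  have hwp : (0:ℝ) ≤ W x ^ (k - 1) := Real.rpow_nonneg hWx0.le _
  have hwq : (0:ℝ) ≤ W x ^ (2 * k - 1) := Real.rpow_nonneg hWx0.le _
  have hkwp : (0:ℝ) < k * W x ^ (k - 1) := by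
    have h := Real.rpow_pos_of_pos hWx0 (k - 1)
    positivity
  -- key identities
  have e1 : W x ^ (k - 1) * (G x / W x) = W x ^ (k - 2) * G x := by
    rw [show k - 1 = (k - 2) + 1 by ring, Real.rpow_add_one hWx0.ne']
    field_simp
  have e2 : W x ^ (2 * k - 1) * (G x / W x) = W x ^ (2 * k - 2) * G x := by
    rw [show 2 * k - 1 = (2 * k - 2) + 1 by ring, Real.rpow_add_one hWx0.ne']
    field_simp
  by_cases htop : W' x = ⊤
  · constructor
    · -- L x = ⊥, so LHS = ⊥
      have hLbot : L x = ⊥ := by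
        have := ha x
        rw [htop, EReal.sub_top] at this
        exact le_bot_iff.mp this
      rw [hLbot, EReal.coe_mul_bot_of_pos hkwp, EReal.bot_add]
      exact bot_le
    · have hpos : (0:ℝ) < k ^ 2 * W x ^ (2 * k - 1) := by
        have h := Real.rpow_pos_of_pos hWx0 (2 * k - 1)
        positivity
      rw [htop, EReal.coe_mul_top_of_pos hpos, EReal.coe_add_top]
      exact le_top
  · have hbot : W' x ≠ ⊥ := by
      intro h
      have h1 := hW' x
      rw [h, le_bot_iff] at h1
      exact EReal.coe_ne_bot 1 (by exact_mod_cast h1)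
    lift W' x to ℝ using ⟨htop, hbot⟩ with r hr
    have hr1 : (1:ℝ) ≤ r := by
      have h1 := hW' x
      rw [← hr] at h1
      exact_mod_cast h1
    have hb1x : G x / W x ≤ N₁ + ε₁ * r := by
      have h1 := hb1 x
      rw [← hr] at h1
      exact_mod_cast h1
    have hb2x : G x / W x ≤ N₂ + 1/2 * r := by
      have h1 := hb2 x
      rw [← hr] at h1
      exact_mod_cast h1
    have hK₁x := hK₁ x r hr1 hr.symm
    have hK₂x := hK₂ x r hr1 hr.symm
    constructor
    · by_cases hLbot : L x = ⊥
      · rw [hLbot, EReal.coe_mul_bot_of_pos hkwp, EReal.bot_add]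
        exact bot_le
      · lift L x to ℝ using ⟨hLne x, hLbot⟩ with ℓ hℓ
        have hℓK : ℓ ≤ K - r := by
          have h1 := ha x
          rw [← hr, ← hℓ] at h1
          exact_mod_cast h1
        norm_cast
        -- real inequality
        have h1 : k * W x ^ (k - 1) * ℓ ≤ k * W x ^ (k - 1) * (K - r) :=
          mul_le_mul_of_nonneg_left hℓK hkwp.le
        have h2 : D * (W x ^ (k - 1) * (G x / W x)) ≤ D * (W x ^ (k - 1) * (N₁ + ε₁ * r)) :=
          mul_le_mul_of_nonneg_left (mul_le_mul_of_nonneg_left hb1x hwp) hD0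
        have h4 : (D * ε₁) * (W x ^ (k - 1) * r) ≤ (k / 4) * (W x ^ (k - 1) * r) :=
          mul_le_mul_of_nonneg_right hDε (by positivity)
        have e1' : D * (W x ^ (k - 1) * (G x / W x)) = D * (W x ^ (k - 2) * G x) := by rw [e1]
        linarith [h1, h2, h4, hK₁x, hK₂pos, e1']
    · norm_cast
      have hg2 : k ^ 2 * (W x ^ (2 * k - 1) * (G x / W x))
          ≤ k ^ 2 * (W x ^ (2 * k - 1) * (N₂ + 1/2 * r)) :=
        mul_le_mul_of_nonneg_left (mul_le_mul_of_nonneg_left hb2x hwq) (by positivity)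
      have e2' : k ^ 2 * (W x ^ (2 * k - 1) * (G x / W x))
          = k ^ 2 * (W x ^ (2 * k - 2) * G x) := by rw [e2]
      linarith [hg2, e2', hK₂x, hK₁pos]
end

section
/- Let (M,d) be a metric space and let x : [0,∞) → M be cadlag (right-continuous with left limits). Let H : M → ℝ be continuous, let r ≥ 0, let ν be a finite nonnegative Borel measure on [−r,0], let K > 0, and let f : [0,∞) → [0,∞) be Borel measurable with ∫_0^T f(s) ds < ∞ for every T > 0 and limsup_{t→∞} (1/t) ∫_0^t f(s) ds ≤ K. Assume that for every ε > 0 there exists R > 0 such that for all t > r: |H(x(t))|·1_{|H(x(t))| > R} ≤ ε · ∫_{[−r,0]} f(t+s) dν(s). For t > 0 let μ_t be the Borel probability measure on M defined by μ_t(B) = (1/t)·λ({ s ∈ [0,t] : x(s) ∈ B }), where λ is Lebesgue measure. If t_n → ∞ and μ_{t_n} converges weakly to a Borel probability measure μ₀, then ∫_M |H| dμ₀ < ∞ and ∫_M H dμ_{t_n} → ∫_M H dμ₀. -/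
open MeasureTheory Filter

/-- The empirical occupation measure of a path `x : ℝ → M` up to time `t`:
`μ_t(B) = (1/t)·λ({ s ∈ [0,t] : x(s) ∈ B })`, realized as the pushforward of
`(1/t)·λ|_{[0,t]}` under `x`. -/
noncomputable def occMeasure {M : Type*} [MeasurableSpace M] (x : ℝ → M) (t : ℝ) :
    Measure M :=
  Measure.map x ((ENNReal.ofReal t)⁻¹ • volume.restrict (Set.Icc (0 : ℝ) t))

/-!
On `(r, t]` the hypothesis bounds the tail `|H(x s)| 1{|H(x s)| > R}` by `ε ∫ f(s + u) dν(u)`,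
and integrating the delay costs at most a factor `ν(ℝ)`, so the time average of the tail is
eventually at most `ε ν(ℝ) (K + 1)`. On `[0, r]` a cadlag path keeps `H ∘ x` bounded, so raising
the level `R` past that bound removes this interval from the tail. Hence `|H|` is uniformly
integrable along `μ_{t_n}`. Truncating `H` at level `R` gives a bounded continuous function, to
which weak convergence applies, at a cost of at most `ε` uniformly in `n`; the portmanteau theorem
(lower semicontinuity of `∫ |g|` for continuous `g`) gives the same bound under `μ₀`.
-/

open Set Topology Metric
open scoped ENNReal BoundedContinuousFunction

section RightContinuous

variable {M : Type*} [TopologicalSpace M] [MeasurableSpace M] [BorelSpace M]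
  [TopologicalSpace.PseudoMetrizableSpace M]

theorem measurable_of_continuousWithinAt_Ici {g : ℝ → M}
    (hg : ∀ t, ContinuousWithinAt g (Ici t) t) : Measurable g := by
  -- `u n s → s` from the right, so `g` is the pointwise limit of the countably-valued `g ∘ u n`
  set u : ℕ → ℝ → ℝ := fun n s => ⌈s * (n + 1)⌉ / (n + 1)
  have hu : ∀ s, Tendsto (fun n => u n s) atTop (𝓝[≥] s) := by
    intro s
    have hlower : ∀ n : ℕ, s ≤ u n s := fun n => by
      rw [le_div_iff₀ (by positivity)]; exact Int.le_ceil _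
    have hupper : ∀ n : ℕ, u n s ≤ s + 1 / ((n : ℝ) + 1) := fun n => by
      rw [div_le_iff₀ (by positivity), add_mul, one_div_mul_cancel (by positivity)]
      exact (Int.ceil_lt_add_one _).le
    refine tendsto_nhdsWithin_iff.2 ⟨?_, Eventually.of_forall hlower⟩
    refine tendsto_of_tendsto_of_tendsto_of_le_of_le tendsto_const_nhds ?_ hlower hupper
    simpa using tendsto_one_div_add_atTop_nhds_zero_nat.const_add s
  refine measurable_of_tendsto_metrizable (f := fun n s => g (u n s)) (fun n => ?_)
    (tendsto_pi_nhds.2 fun s => (hg s).tendsto.comp (hu s))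
  exact (measurable_of_countable fun k : ℤ => g (k / (n + 1))).comp
    (Int.measurable_ceil.comp (measurable_mul_const _))

theorem aemeasurable_restrict_Ici_of_continuousWithinAt_Ici {g : ℝ → M} {a : ℝ}
    {μ : Measure ℝ} (hg : ∀ t, a ≤ t → ContinuousWithinAt g (Ici t) t) :
    AEMeasurable g (μ.restrict (Ici a)) := by
  have hmeas : Measurable fun s => g (max s a) :=
    measurable_of_continuousWithinAt_Ici fun t =>
      (hg _ (le_max_right t a)).comp (f := fun s => max s a)
        (continuous_id.max continuous_const).continuousWithinAt fun s hs => max_le_max_right a hs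
  exact hmeas.aemeasurable.congr
    (ae_restrict_of_forall_mem measurableSet_Ici fun s (hs : a ≤ s) => by
      simp only [max_eq_left hs])

end RightContinuous

theorem isBounded_image_Icc_of_cadlag {E : Type*} [PseudoMetricSpace E] {g : ℝ → E} {a b : ℝ}
    (hrc : ∀ t ∈ Icc a b, ContinuousWithinAt g (Ici t) t)
    (hll : ∀ t ∈ Ioc a b, ∃ l, Tendsto g (𝓝[<] t) (𝓝 l)) :
    Bornology.IsBounded (g '' Icc a b) := by
  refine isCompact_Icc.induction_on (p := fun s => Bornology.IsBounded (g '' s)) (by simp)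
    (fun s t hst ht => ht.subset (image_mono hst))
    (fun s t hs ht => by rw [image_union]; exact hs.union ht) fun t ht => ?_
  have hright : g ⁻¹' ball (g t) 1 ∈ 𝓝[≥] t := hrc t ht (ball_mem_nhds _ one_pos)
  rcases ht.1.eq_or_lt with rfl | hat
  · exact ⟨_, nhdsWithin_mono _ Icc_subset_Ici_self hright,
      isBounded_ball.subset (image_preimage_subset _ _)⟩
  · obtain ⟨l, hl⟩ := hll t ⟨hat, ht.2⟩
    refine ⟨g ⁻¹' (ball (g t) 1 ∪ ball l 1), mem_nhdsWithin_of_mem_nhds ?_,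
      (isBounded_ball.union isBounded_ball).subset (image_preimage_subset _ _)⟩
    rw [← nhdsLT_sup_nhdsGE, mem_sup]
    exact ⟨mem_of_superset (hl (ball_mem_nhds _ one_pos)) (preimage_mono subset_union_right),
      mem_of_superset hright (preimage_mono subset_union_left)⟩

section Occupation

variable {M : Type*} [MeasurableSpace M] {x : ℝ → M} {t : ℝ}

theorem lintegral_occMeasure (hx : AEMeasurable x (volume.restrict (Icc 0 t))) {g : M → ℝ≥0∞}
    (hg : Measurable g) :
    ∫⁻ y, g y ∂occMeasure x t = (ENNReal.ofReal t)⁻¹ * ∫⁻ s in Icc 0 t, g (x s) := by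
  rw [occMeasure, lintegral_map' hg.aemeasurable (hx.smul_measure _), lintegral_smul_measure,
    smul_eq_mul]

theorem isProbabilityMeasure_occMeasure (ht : 0 < t)
    (hx : AEMeasurable x (volume.restrict (Icc 0 t))) : IsProbabilityMeasure (occMeasure x t) := by
  constructor
  rw [← setLIntegral_one, ← lintegral_indicator MeasurableSet.univ,
    lintegral_occMeasure hx (measurable_const.indicator MeasurableSet.univ)]
  simp [Real.volume_Icc, ENNReal.inv_mul_cancel (ENNReal.ofReal_pos.2 ht).ne']

end Occupation

section Delay

variable {F : ℝ → ℝ≥0∞} {ν : Measure ℝ} {r : ℝ}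

theorem setLIntegral_Ioc_lintegral_comp_add_le [SFinite ν] (hF : Measurable F)
    (hν : ∀ᵐ u ∂ν, u ∈ Icc (-r) 0) (t : ℝ) :
    ∫⁻ s in Ioc r t, ∫⁻ u, F (s + u) ∂ν ≤ ν univ * ∫⁻ s in Icc 0 t, F s := by
  rw [lintegral_lintegral_swap (f := fun s u => F (s + u)) (hF.comp measurable_add).aemeasurable,
    mul_comm, ← lintegral_const]
  refine lintegral_mono_ae (hν.mono fun u hu => ?_)
  calc ∫⁻ s in Ioc r t, F (s + u)
      ≤ ∫⁻ s in (· + u) ⁻¹' Icc 0 t, F (s + u) :=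
        lintegral_mono_set fun s hs => ⟨by linarith [hs.1, hu.1], by linarith [hs.2, hu.2]⟩
    _ = ∫⁻ s in Icc 0 t, F s := by
        rw [← setLIntegral_map measurableSet_Icc hF (measurable_add_const u),
          map_add_right_eq_self]

theorem setLIntegral_Icc_le_of_le_delay [SFinite ν] (hF : Measurable F)
    (hν : ∀ᵐ u ∂ν, u ∈ Icc (-r) 0) {φ : ℝ → ℝ≥0∞} {c : ℝ≥0∞} (hφ₀ : ∀ s ∈ Icc 0 r, φ s = 0)
    (hφ : ∀ t, r < t → φ t ≤ c * ∫⁻ u, F (t + u) ∂ν) (t : ℝ) :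
    ∫⁻ s in Icc 0 t, φ s ≤ c * (ν univ * ∫⁻ s in Icc 0 t, F s) := by
  have hinner : Measurable fun s => ∫⁻ u, F (s + u) ∂ν :=
    (hF.comp (measurable_fst.add measurable_snd)).lintegral_prod_right'
  calc ∫⁻ s in Icc 0 t, φ s
      ≤ ∫⁻ s in Icc 0 r ∪ Ioc r t, φ s :=
        lintegral_mono_set fun s hs => (le_or_gt s r).imp (fun h => ⟨hs.1, h⟩) (fun h => ⟨h, hs.2⟩)
    _ ≤ (∫⁻ s in Icc 0 r, φ s) + ∫⁻ s in Ioc r t, φ s := lintegral_union_le _ _ _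
    _ = ∫⁻ s in Ioc r t, φ s := by
        rw [setLIntegral_congr_fun measurableSet_Icc hφ₀, lintegral_zero, zero_add]
    _ ≤ ∫⁻ s in Ioc r t, c * ∫⁻ u, F (s + u) ∂ν :=
        setLIntegral_mono' measurableSet_Ioc fun s hs => hφ s hs.1
    _ = c * ∫⁻ s in Ioc r t, ∫⁻ u, F (s + u) ∂ν := lintegral_const_mul c hinner
    _ ≤ c * (ν univ * ∫⁻ s in Icc 0 t, F s) := by
        gcongr; exact setLIntegral_Ioc_lintegral_comp_add_le hF hν t

theorem eventually_average_le_of_le_delay [SFinite ν] (hF : Measurable F)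
    (hν : ∀ᵐ u ∂ν, u ∈ Icc (-r) 0) {φ : ℝ → ℝ≥0∞} {c K : ℝ≥0∞}
    (hφ₀ : ∀ s ∈ Icc 0 r, φ s = 0) (hφ : ∀ t, r < t → φ t ≤ c * ∫⁻ u, F (t + u) ∂ν)
    (hK : limsup (fun t => (∫⁻ s in Icc 0 t, F s) / ENNReal.ofReal t) atTop < K) :
    ∀ᶠ t in atTop, (ENNReal.ofReal t)⁻¹ * ∫⁻ s in Icc 0 t, φ s ≤ c * (ν univ * K) := by
  filter_upwards [eventually_lt_of_limsup_lt hK] with t ht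
  calc (ENNReal.ofReal t)⁻¹ * ∫⁻ s in Icc 0 t, φ s
      ≤ (ENNReal.ofReal t)⁻¹ * (c * (ν univ * ∫⁻ s in Icc 0 t, F s)) := by
        gcongr; exact setLIntegral_Icc_le_of_le_delay hF hν hφ₀ hφ t
    _ = c * (ν univ * ((∫⁻ s in Icc 0 t, F s) / ENNReal.ofReal t)) := by
        rw [ENNReal.div_eq_inv_mul]; ring
    _ ≤ c * (ν univ * K) := by gcongr

end Delay

theorem eventually_setLIntegral_occMeasure_le {M : Type*} [MeasurableSpace M] {x : ℝ → M}
    (hx : ∀ t, AEMeasurable x (volume.restrict (Icc 0 t))) {H : M → ℝ} (hH : Measurable H)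
    {F : ℝ → ℝ≥0∞} (hF : Measurable F) {ν : Measure ℝ} [SFinite ν] {r : ℝ}
    (hν : ∀ᵐ u ∂ν, u ∈ Icc (-r) 0) {R₀ R : ℝ} {c K : ℝ≥0∞} (hR₀ : R₀ ≤ R)
    (hR : ∀ s ∈ Icc 0 r, |H (x s)| ≤ R)
    (hdom : ∀ t, r < t → (if R₀ < |H (x t)| then ENNReal.ofReal |H (x t)| else 0) ≤
      c * ∫⁻ u, F (t + u) ∂ν)
    (hK : limsup (fun t => (∫⁻ s in Icc 0 t, F s) / ENNReal.ofReal t) atTop < K) :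
    ∀ᶠ t in atTop, ∫⁻ z in {z | R < |H z|}, ‖H z‖ₑ ∂occMeasure x t ≤ c * (ν univ * K) := by
  set S := {z | R < |H z|}
  have hS : MeasurableSet S := measurableSet_lt measurable_const hH.abs
  have hφ₀ (s : ℝ) (hs : s ∈ Icc 0 r) : S.indicator (‖H ·‖ₑ) (x s) = 0 :=
    indicator_of_notMem (show x s ∉ S from not_lt.2 (hR s hs)) _
  have hφ (t : ℝ) (ht : r < t) : S.indicator (‖H ·‖ₑ) (x t) ≤ c * ∫⁻ u, F (t + u) ∂ν := by
    refine le_trans ?_ (hdom t ht)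
    by_cases h : x t ∈ S
    · rw [indicator_of_mem h, if_pos (hR₀.trans_lt h), Real.enorm_eq_ofReal_abs]
    · rw [indicator_of_notMem h]
      exact bot_le
  filter_upwards [eventually_average_le_of_le_delay hF hν hφ₀ hφ hK] with t ht
  rwa [← lintegral_indicator hS, lintegral_occMeasure (hx t) (hH.enorm.indicator hS)]

noncomputable def truncation {M : Type*} [TopologicalSpace M] {H : M → ℝ} (hH : Continuous H)
    (R : ℝ) : M →ᵇ ℝ :=
  have hmem (z : M) : max (min (H z) R) (-R) ∈ Icc (-|R|) |R| :=
    ⟨(neg_le_neg (le_abs_self R)).trans (le_max_right _ _),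
      max_le ((min_le_right _ _).trans (le_abs_self R)) (neg_le_abs R)⟩
  .mkOfBound ⟨fun z => max (min (H z) R) (-R), by fun_prop⟩ (|R| - -|R|)
    fun a b => Real.dist_le_of_mem_Icc (hmem a) (hmem b)

theorem enorm_sub_truncation_le {M : Type*} [TopologicalSpace M] {H : M → ℝ} (hH : Continuous H)
    {R : ℝ} (hR : 0 ≤ R) (z : M) :
    ‖H z - truncation hH R z‖ₑ ≤ {z | R < |H z|}.indicator (‖H ·‖ₑ) z := by
  change ‖H z - max (min (H z) R) (-R)‖ₑ ≤ _
  by_cases h : R < |H z|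
  · rw [indicator_of_mem (show z ∈ {z | R < |H z|} from h), Real.enorm_eq_ofReal_abs,
      Real.enorm_eq_ofReal_abs]
    exact ENNReal.ofReal_le_ofReal (by grind [abs_of_nonneg, abs_of_neg])
  · rw [not_lt, abs_le] at h
    simp [min_eq_left h.2, max_eq_left h.1]

theorem lintegral_enorm_le_add_setLIntegral {M : Type*} [MeasurableSpace M] {H : M → ℝ}
    (hH : Measurable H) (ρ : Measure M) (R : ℝ) :
    ∫⁻ z, ‖H z‖ₑ ∂ρ ≤ ENNReal.ofReal R * ρ univ + ∫⁻ z in {z | R < |H z|}, ‖H z‖ₑ ∂ρ := by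
  rw [← lintegral_indicator (measurableSet_lt measurable_const hH.abs), ← lintegral_const,
    ← lintegral_add_left measurable_const]
  refine lintegral_mono fun z => ?_
  by_cases h : R < |H z|
  · rw [indicator_of_mem (show z ∈ {z | R < |H z|} from h)]; exact le_add_self
  · rw [indicator_of_notMem (show z ∉ {z | R < |H z|} from h), add_zero, Real.enorm_eq_ofReal_abs]
    exact ENNReal.ofReal_le_ofReal (not_lt.1 h)

theorem edist_integral_le_lintegral_enorm_sub {α E : Type*} [MeasurableSpace α]
    [NormedAddCommGroup E] [NormedSpace ℝ E] {ρ : Measure α} {f g : α → E} (hf : Integrable f ρ) (hg : Integrable g ρ) :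
    edist (∫ z, f z ∂ρ) (∫ z, g z ∂ρ) ≤ ∫⁻ z, ‖f z - g z‖ₑ ∂ρ := by
  rw [edist_eq_enorm_sub, ← integral_sub hf hg]
  exact enorm_integral_le_lintegral_enorm _

section WeakConvergence

variable {M : Type*} [TopologicalSpace M] [HasOuterApproxClosed M] [MeasurableSpace M]
  [OpensMeasurableSpace M] {μs : ℕ → Measure M} [∀ n, IsProbabilityMeasure (μs n)]
  {μ : Measure M} [IsProbabilityMeasure μ]

theorem lintegral_enorm_le_of_forall_integral_tendsto
    (hweak : ∀ g : M →ᵇ ℝ, Tendsto (fun n => ∫ z, g z ∂μs n) atTop (𝓝 (∫ z, g z ∂μ)))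
    {g : M → ℝ} (hg : Continuous g) {c : ℝ≥0∞}
    (hc : ∀ᶠ n in atTop, ∫⁻ z, ‖g z‖ₑ ∂μs n ≤ c) : ∫⁻ z, ‖g z‖ₑ ∂μ ≤ c := by
  let P : ℕ → ProbabilityMeasure M := fun n => ⟨μs n, inferInstance⟩
  have hP : Tendsto P atTop (𝓝 ⟨μ, inferInstance⟩) :=
    ProbabilityMeasure.tendsto_iff_forall_integral_tendsto.2 hweak
  simp only [Real.enorm_eq_ofReal_abs] at hc ⊢
  exact (lintegral_le_liminf_lintegral_of_forall_isOpen_measure_le_liminf_measure hg.abs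
    (fun z => abs_nonneg _) fun G hG => ProbabilityMeasure.le_liminf_measure_open_of_tendsto hP hG
    ).trans (liminf_le_of_frequently_le' hc.frequently)

theorem integrable_of_forall_integral_tendsto_of_tail_le
    (hweak : ∀ g : M →ᵇ ℝ, Tendsto (fun n => ∫ z, g z ∂μs n) atTop (𝓝 (∫ z, g z ∂μ)))
    {H : M → ℝ} (hH : Continuous H) {R ε : ℝ}
    (htail : ∀ᶠ n in atTop, ∫⁻ z in {z | R < |H z|}, ‖H z‖ₑ ∂μs n ≤ ENNReal.ofReal ε) :
    (∀ᶠ n in atTop, Integrable H (μs n)) ∧ Integrable H μ := by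
  have hbound : ∀ᶠ n in atTop, ∫⁻ z, ‖H z‖ₑ ∂μs n ≤ ENNReal.ofReal R + ENNReal.ofReal ε :=
    htail.mono fun n hn => (lintegral_enorm_le_add_setLIntegral hH.measurable _ R).trans
      (by rw [measure_univ, mul_one]; gcongr)
  refine ⟨hbound.mono fun n hn => ⟨hH.aestronglyMeasurable, hn.trans_lt (by finiteness)⟩,
    hH.aestronglyMeasurable, ?_⟩
  exact (lintegral_enorm_le_of_forall_integral_tendsto hweak hH hbound).trans_lt (by finiteness)

theorem tendsto_integral_of_forall_integral_tendsto_of_tail_le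
    (hweak : ∀ g : M →ᵇ ℝ, Tendsto (fun n => ∫ z, g z ∂μs n) atTop (𝓝 (∫ z, g z ∂μ)))
    {H : M → ℝ} (hH : Continuous H)
    (htail : ∀ ε : ℝ, 0 < ε → ∃ R, 0 ≤ R ∧
      ∀ᶠ n in atTop, ∫⁻ z in {z | R < |H z|}, ‖H z‖ₑ ∂μs n ≤ ENNReal.ofReal ε) :
    Integrable H μ ∧ Tendsto (fun n => ∫ z, H z ∂μs n) atTop (𝓝 (∫ z, H z ∂μ)) := by
  obtain ⟨R₁, -, hR₁⟩ := htail 1 one_pos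
  refine ⟨(integrable_of_forall_integral_tendsto_of_tail_le hweak hH hR₁).2,
    Metric.tendsto_nhds.2 fun δ hδ => ?_⟩
  obtain ⟨R, hR₀, hR⟩ := htail (δ / 3) (by positivity)
  obtain ⟨hint_n, hint⟩ := integrable_of_forall_integral_tendsto_of_tail_le hweak hH hR
  set T := truncation hH R
  have hHT (ρ : Measure M) :
      ∫⁻ z, ‖H z - T z‖ₑ ∂ρ ≤ ∫⁻ z in {z | R < |H z|}, ‖H z‖ₑ ∂ρ := by
    rw [← lintegral_indicator (measurableSet_lt measurable_const hH.measurable.abs)]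
    exact lintegral_mono (enorm_sub_truncation_le hH hR₀)
  have hn : ∀ᶠ n in atTop, dist (∫ z, H z ∂μs n) (∫ z, T z ∂μs n) ≤ δ / 3 := by
    filter_upwards [hR, hint_n] with n hn hHn
    exact (edist_le_ofReal (by positivity)).1
      ((edist_integral_le_lintegral_enorm_sub hHn (T.integrable _)).trans ((hHT _).trans hn))
  have h₀ : dist (∫ z, T z ∂μ) (∫ z, H z ∂μ) ≤ δ / 3 := by
    rw [dist_comm]
    exact (edist_le_ofReal (by positivity)).1
      ((edist_integral_le_lintegral_enorm_sub hint (T.integrable _)).trans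
        (lintegral_enorm_le_of_forall_integral_tendsto hweak (hH.sub T.continuous)
          (hR.mono fun n hn => (hHT _).trans hn)))
  filter_upwards [hn, Metric.tendsto_nhds.1 (hweak T) (δ / 3) (by positivity)] with n h₁ h₂
  calc dist (∫ z, H z ∂μs n) (∫ z, H z ∂μ)
      ≤ dist (∫ z, H z ∂μs n) (∫ z, T z ∂μs n) + dist (∫ z, T z ∂μs n) (∫ z, T z ∂μ)
        + dist (∫ z, T z ∂μ) (∫ z, H z ∂μ) := dist_triangle4 _ _ _ _
    _ < δ := by linarith

end WeakConvergence

theorem stmt_11_general {M : Type*} [MetricSpace M] [MeasurableSpace M] [BorelSpace M]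
    (x : ℝ → M)
    (hx_rc : ∀ t : ℝ, 0 ≤ t → ContinuousWithinAt x (Set.Ici t) t)
    (hx_ll : ∀ t : ℝ, 0 < t → ∃ l : M, Tendsto x (nhdsWithin t (Set.Iio t)) (nhds l))
    (H : M → ℝ) (hH : Continuous H)
    (r : ℝ)
    (ν : Measure ℝ) [IsFiniteMeasure ν] (hν : ν (Set.Icc (-r) 0)ᶜ = 0)
    (K : ℝ)
    (f : ℝ → ℝ) (hf_meas : Measurable f)
    (hf_limsup : limsup (fun t : ℝ =>
        (∫⁻ s in Set.Icc (0 : ℝ) t, ENNReal.ofReal (f s)) / ENNReal.ofReal t) atTop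
        ≤ ENNReal.ofReal K)
    (hdom : ∀ ε : ℝ, 0 < ε → ∃ R : ℝ, 0 < R ∧ ∀ t : ℝ, r < t →
      (if R < |H (x t)| then ENNReal.ofReal |H (x t)| else 0)
        ≤ ENNReal.ofReal ε * ∫⁻ s, ENNReal.ofReal (f (t + s)) ∂ν)
    (tn : ℕ → ℝ) (htn_pos : ∀ n, 0 < tn n) (htn : Tendsto tn atTop atTop)
    (μ₀ : Measure M) [IsProbabilityMeasure μ₀]
    (hweak : ∀ g : BoundedContinuousFunction M ℝ,
      Tendsto (fun n => ∫ y, g y ∂(occMeasure x (tn n))) atTop (nhds (∫ y, g y ∂μ₀))) :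
    (∫⁻ y, ENNReal.ofReal |H y| ∂μ₀ < ⊤) ∧
      Tendsto (fun n => ∫ y, H y ∂(occMeasure x (tn n))) atTop (nhds (∫ y, H y ∂μ₀)) := by
  have hx (t : ℝ) : AEMeasurable x (volume.restrict (Icc 0 t)) :=
    (aemeasurable_restrict_Ici_of_continuousWithinAt_Ici hx_rc).mono_set Icc_subset_Ici_self
  have (n : ℕ) : IsProbabilityMeasure (occMeasure x (tn n)) :=
    isProbabilityMeasure_occMeasure (htn_pos n) (hx _)
  obtain ⟨C, hC⟩ := (isBounded_image_Icc_of_cadlag (g := H ∘ x) (a := 0) (b := r)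
    (fun t ht => hH.continuousAt.comp_continuousWithinAt (hx_rc t ht.1))
    fun t ht => let ⟨l, hl⟩ := hx_ll t ht.1; ⟨H l, (hH.tendsto l).comp hl⟩).exists_norm_le
  refine (tendsto_integral_of_forall_integral_tendsto_of_tail_le hweak hH fun ε hε => ?_).imp
    (fun h => by simpa only [Real.enorm_eq_ofReal_abs] using hasFiniteIntegral_iff_enorm.1 h.2) id
  obtain ⟨ε', hε', hε'ε⟩ := ENNReal.exists_nnreal_pos_mul_lt
    (b := ENNReal.ofReal ε) (a := ν univ * (ENNReal.ofReal K + 1)) (by finiteness)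
    (ENNReal.ofReal_pos.2 hε).ne'
  obtain ⟨R, hR, hRdom⟩ := hdom ε' hε'
  refine ⟨max R C, hR.le.trans (le_max_left _ _), ?_⟩
  exact htn.eventually (eventually_setLIntegral_occMeasure_le hx hH.measurable
    hf_meas.ennreal_ofReal (mem_ae_iff.2 hν) (le_max_left R C)
    (fun s hs => (hC _ (mem_image_of_mem _ hs)).trans (le_max_right R C)) hRdom
    (hf_limsup.trans_lt (ENNReal.lt_add_right ENNReal.ofReal_ne_top one_ne_zero)))
    |>.mono fun n hn => hn.trans (by simpa using hε'ε.le)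

/-- for a cadlag path `x` in a metric space, a continuous `H`, a
finite measure `ν` on `[−r,0]` and a nonnegative `f` with time averages bounded
by `K`, if `|H(x(t))|·1_{|H(x(t))|>R} ≤ ε ∫_{[−r,0]} f(t+s) dν(s)` for suitable
`R = R(ε)` and all `t > r`, then along any sequence `t_n → ∞` with
`μ_{t_n} → μ₀` weakly one has `∫|H| dμ₀ < ∞` and `∫ H dμ_{t_n} → ∫ H dμ₀`. -/
theorem stmt_11 {M : Type*} [MetricSpace M] [MeasurableSpace M] [BorelSpace M]
    (x : ℝ → M)
    (hx_rc : ∀ t : ℝ, 0 ≤ t → ContinuousWithinAt x (Set.Ici t) t)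
    (hx_ll : ∀ t : ℝ, 0 < t → ∃ l : M, Tendsto x (nhdsWithin t (Set.Iio t)) (nhds l))
    (H : M → ℝ) (hH : Continuous H)
    (r : ℝ) (hr : 0 ≤ r)
    (ν : Measure ℝ) [IsFiniteMeasure ν] (hν : ν (Set.Icc (-r) 0)ᶜ = 0)
    (K : ℝ) (hK : 0 < K)
    (f : ℝ → ℝ) (hf_nonneg : ∀ s, 0 ≤ f s) (hf_meas : Measurable f)
    (hf_int : ∀ T : ℝ, 0 < T → ∫⁻ s in Set.Icc (0 : ℝ) T, ENNReal.ofReal (f s) < ⊤)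
    (hf_limsup : limsup (fun t : ℝ =>
        (∫⁻ s in Set.Icc (0 : ℝ) t, ENNReal.ofReal (f s)) / ENNReal.ofReal t) atTop
        ≤ ENNReal.ofReal K)
    (hdom : ∀ ε : ℝ, 0 < ε → ∃ R : ℝ, 0 < R ∧ ∀ t : ℝ, r < t →
      (if R < |H (x t)| then ENNReal.ofReal |H (x t)| else 0)
        ≤ ENNReal.ofReal ε * ∫⁻ s, ENNReal.ofReal (f (t + s)) ∂ν)
    (tn : ℕ → ℝ) (htn_pos : ∀ n, 0 < tn n) (htn : Tendsto tn atTop atTop)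
    (μ₀ : Measure M) [IsProbabilityMeasure μ₀]
    (hweak : ∀ g : BoundedContinuousFunction M ℝ,
      Tendsto (fun n => ∫ y, g y ∂(occMeasure x (tn n))) atTop (nhds (∫ y, g y ∂μ₀))) :
    (∫⁻ y, ENNReal.ofReal |H y| ∂μ₀ < ⊤) ∧
      Tendsto (fun n => ∫ y, H y ∂(occMeasure x (tn n))) atTop (nhds (∫ y, H y ∂μ₀)) :=
  stmt_11_general x hx_rc hx_ll H hH r ν hν K f hf_meas hf_limsup hdom tn htn_pos htn μ₀ hweak
end

section
/- Let (Ω, Σ, μ) be a measure space, let (e_n)_{n≥1} be an orthonormal family in L²(μ) of real-valued functions with e_n ∈ L^∞(μ) for every n, let (a_n)_{n≥1} be nonnegative real numbers, let p > 2, and define q by 1/q = 1/2 − 1/p. Then for every real-valued x ∈ L¹(μ) ∩ L²(μ): Σ_{n≥1} a_n² ⟨x, e_n⟩² ≤ ( Σ_{n≥1} a_n^p ‖e_n‖_{L^∞}² )^{2/p} · ‖x‖_{L¹}^{4/p} · ‖x‖_{L²}^{4/q}, where ⟨x, e_n⟩ = ∫_Ω x e_n dμ and the right-hand side may equal +∞.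 -/
/-! Write `c_n = ⟨x, e_n⟩`. Hölder's inequality with exponents `p/2` and `p/(p-2)`, applied to
`(a_n c_n)² = (a_n² |c_n|^{4/p}) · |c_n|^{2 - 4/p}`, bounds `∑ a_n² c_n²` by
`(∑ a_nᵖ c_n²)^{2/p} (∑ c_n²)^{1 - 2/p}`. In the first factor `|c_n| ≤ ‖x‖₁ ‖e_n‖_∞`, the second
is at most `‖x‖₂^{2(1 - 2/p)} = ‖x‖₂^{4/q}` by Bessel's inequality. -/

open MeasureTheory

open scoped ENNReal

theorem ENNReal.inner_le_Lp_mul_Lq_tsum {ι : Type*} (f g : ι → ℝ≥0∞) {p q : ℝ}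
    (hpq : p.HolderConjugate q) :
    ∑' i, f i * g i ≤ (∑' i, f i ^ p) ^ (1 / p) * (∑' i, g i ^ q) ^ (1 / q) := by
  rw [ENNReal.tsum_eq_iSup_sum]
  refine iSup_le fun s => (ENNReal.inner_le_Lp_mul_Lq s f g hpq).trans ?_
  have := hpq.one_div_nonneg
  have := hpq.symm.one_div_nonneg
  gcongr <;> exact ENNReal.sum_le_tsum s

theorem ENNReal.tsum_mul_sq_le {ι : Type*} (w γ : ι → ℝ≥0∞) {p : ℝ} (hp : 2 < p) :
    ∑' i, (w i * γ i) ^ 2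
      ≤ (∑' i, w i ^ p * γ i ^ 2) ^ (2 / p) * (∑' i, γ i ^ 2) ^ (1 - 2 / p) := by
  have hp0 : 0 < p := by linarith
  have hp2 : p - 2 ≠ 0 := by linarith
  have h4p : 4 / p ≤ 2 := by rw [div_le_iff₀ hp0]; linarith
  have hpq : (p / 2).HolderConjugate (p / (p - 2)) := by
    rw [Real.holderConjugate_iff_eq_conjExponent (by linarith)]
    field_simp
  have hsplit : ∀ i, (w i * γ i) ^ 2 = (w i ^ (2 : ℝ) * γ i ^ (4 / p)) * γ i ^ (2 - 4 / p) := by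
    intro i
    rw [mul_assoc, ← ENNReal.rpow_add_of_nonneg _ _ (by positivity) (by linarith),
      add_sub_cancel, ← ENNReal.mul_rpow_of_nonneg _ _ zero_le_two, ENNReal.rpow_two]
  have hfirst : ∀ i, (w i ^ (2 : ℝ) * γ i ^ (4 / p)) ^ (p / 2) = w i ^ p * γ i ^ 2 := by
    intro i
    rw [ENNReal.mul_rpow_of_nonneg _ _ (by positivity), ← ENNReal.rpow_mul, ← ENNReal.rpow_mul,
      ← ENNReal.rpow_two]
    congr 2
    · field_simp
    · field_simp; norm_num
  have hsecond : ∀ i, (γ i ^ (2 - 4 / p)) ^ (p / (p - 2)) = γ i ^ 2 := by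
    intro i
    rw [← ENNReal.rpow_mul, ← ENNReal.rpow_two]
    congr 1
    field_simp
    ring
  calc ∑' i, (w i * γ i) ^ 2
      = ∑' i, (w i ^ (2 : ℝ) * γ i ^ (4 / p)) * γ i ^ (2 - 4 / p) := tsum_congr hsplit
    _ ≤ _ := ENNReal.inner_le_Lp_mul_Lq_tsum _ _ hpq
    _ = _ := by
      simp only [hfirst, hsecond, one_div_div]
      congr 2
      field_simp

theorem Orthonormal.tsum_enorm_inner_sq_le {ι E : Type*} [NormedAddCommGroup E]
    [InnerProductSpace ℝ E] {v : ι → E} (hv : Orthonormal ℝ v) (x : E) :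
    ∑' i, ‖inner ℝ (v i) x‖ₑ ^ 2 ≤ ‖x‖ₑ ^ 2 := by
  rw [ENNReal.tsum_eq_iSup_sum]
  refine iSup_le fun s => ?_
  simp only [← ofReal_norm, ← ENNReal.ofReal_pow (norm_nonneg _)]
  rw [← ENNReal.ofReal_sum_of_nonneg fun i _ => by positivity]
  exact ENNReal.ofReal_le_ofReal (hv.sum_inner_products_le x)

namespace MeasureTheory

variable {X : Type*} [MeasurableSpace X] {μ : Measure X}

theorem MemLp.inner_toLp_toLp {f g : X → ℝ} (hf : MemLp f 2 μ) (hg : MemLp g 2 μ) :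
    inner ℝ (hf.toLp f) (hg.toLp g) = ∫ ω, f ω * g ω ∂μ := by
  rw [L2.inner_def]
  refine integral_congr_ae ?_
  filter_upwards [hf.coeFn_toLp, hg.coeFn_toLp] with ω hfω hgω
  rw [hfω, hgω, real_inner_eq_re_inner, RCLike.inner_apply]
  simp [mul_comm]

theorem orthonormal_toLp_of_integral_mul {ι : Type*} [DecidableEq ι] {e : ι → X → ℝ}
    (he : ∀ i, MemLp (e i) 2 μ)
    (hortho : ∀ i j, ∫ ω, e i ω * e j ω ∂μ = if i = j then 1 else 0) :
    Orthonormal ℝ fun i => (he i).toLp (e i) := by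
  rw [orthonormal_iff_ite]
  intro i j
  rw [(he i).inner_toLp_toLp (he j), hortho]

theorem tsum_enorm_integral_mul_sq_le {ι : Type*} {e : ι → X → ℝ} (he : ∀ i, MemLp (e i) 2 μ)
    (hon : Orthonormal ℝ fun i => (he i).toLp (e i)) {x : X → ℝ} (hx : MemLp x 2 μ) :
    ∑' i, ‖∫ ω, x ω * e i ω ∂μ‖ₑ ^ 2 ≤ eLpNorm x 2 μ ^ 2 := by
  have := hon.tsum_enorm_inner_sq_le (hx.toLp x)
  simp only [MemLp.inner_toLp_toLp, Lp.enorm_toLp] at this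
  simpa only [mul_comm] using this

theorem enorm_integral_mul_le {f g : X → ℝ} (hf : AEStronglyMeasurable f μ) :
    ‖∫ ω, f ω * g ω ∂μ‖ₑ ≤ eLpNorm f 1 μ * eLpNorm g ⊤ μ := by
  refine (enorm_integral_le_lintegral_enorm _).trans ?_
  rw [← eLpNorm_one_eq_lintegral_enorm]
  simpa using eLpNorm_le_eLpNorm_mul_eLpNorm_top 1 hf g (· * ·) 1
    (.of_forall fun ω => by rw [one_mul, nnnorm_mul])

end MeasureTheory

theorem stmt_15_general {X : Type*} [MeasurableSpace X] (μ : Measure X)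
    (e : ℕ → X → ℝ)
    (he2 : ∀ n, MemLp (e n) 2 μ)
    (hortho : ∀ n k : ℕ, ∫ ω, e n ω * e k ω ∂μ = if n = k then (1 : ℝ) else 0)
    (a : ℕ → ℝ) (ha : ∀ n, 0 ≤ a n)
    (p q : ℝ) (hp : 2 < p) (hq : 1 / q = 1 / 2 - 1 / p)
    (x : X → ℝ) (hx2 : MemLp x 2 μ) :
    (∑' n : ℕ, ENNReal.ofReal (a n ^ 2 * (∫ ω, x ω * e n ω ∂μ) ^ 2))
      ≤ (∑' n : ℕ, ENNReal.ofReal (a n ^ p) * (eLpNorm (e n) ⊤ μ) ^ 2) ^ (2 / p)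
          * (eLpNorm x 1 μ) ^ (4 / p) * (eLpNorm x 2 μ) ^ (4 / q) := by
  set c : ℕ → ℝ := fun n => ∫ ω, x ω * e n ω ∂μ
  set T := ∑' n : ℕ, ENNReal.ofReal (a n ^ p) * (eLpNorm (e n) ⊤ μ) ^ 2
  have hp0 : 0 < p := by linarith
  have hterm : ∀ n, ENNReal.ofReal (a n ^ 2 * c n ^ 2) = (ENNReal.ofReal (a n) * ‖c n‖ₑ) ^ 2 := by
    intro n
    rw [← ofReal_norm, ← ENNReal.ofReal_mul (ha n),
      ← ENNReal.ofReal_pow (mul_nonneg (ha n) (norm_nonneg _)), mul_pow, Real.norm_eq_abs, sq_abs]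
  have hweighted : ∑' n, ENNReal.ofReal (a n) ^ p * ‖c n‖ₑ ^ 2 ≤ eLpNorm x 1 μ ^ 2 * T := by
    rw [← ENNReal.tsum_mul_left]
    refine ENNReal.tsum_le_tsum fun n => ?_
    rw [ENNReal.ofReal_rpow_of_nonneg (ha n) hp0.le, mul_left_comm, ← mul_pow]
    gcongr
    exact enorm_integral_mul_le hx2.aestronglyMeasurable
  have hbessel : ∑' n, ‖c n‖ₑ ^ 2 ≤ eLpNorm x 2 μ ^ 2 :=
    tsum_enorm_integral_mul_sq_le he2 (orthonormal_toLp_of_integral_mul he2 hortho) hx2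
  have h4q : 4 / q = 2 * (1 - 2 / p) := by
    rw [div_eq_mul_one_div, hq]; ring
  have h2p : 0 ≤ 1 - 2 / p := by
    rw [sub_nonneg, div_le_one hp0]; exact hp.le
  calc ∑' n, ENNReal.ofReal (a n ^ 2 * c n ^ 2)
      = ∑' n, (ENNReal.ofReal (a n) * ‖c n‖ₑ) ^ 2 := tsum_congr hterm
    _ ≤ (∑' n, ENNReal.ofReal (a n) ^ p * ‖c n‖ₑ ^ 2) ^ (2 / p)
          * (∑' n, ‖c n‖ₑ ^ 2) ^ (1 - 2 / p) := ENNReal.tsum_mul_sq_le _ _ hp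
    _ ≤ (eLpNorm x 1 μ ^ 2 * T) ^ (2 / p) * (eLpNorm x 2 μ ^ 2) ^ (1 - 2 / p) := by
      gcongr
    _ = T ^ (2 / p) * eLpNorm x 1 μ ^ (4 / p) * eLpNorm x 2 μ ^ (4 / q) := by
      rw [ENNReal.mul_rpow_of_nonneg _ _ (div_nonneg zero_le_two hp0.le), ← ENNReal.rpow_two,
        ← ENNReal.rpow_two, ← ENNReal.rpow_mul, ← ENNReal.rpow_mul, h4q]
      ring_nf

/-- if `(e_n)` is an orthonormal family in `L²(μ)` of essentially
bounded functions, `a_n ≥ 0`, `p > 2` and `1/q = 1/2 − 1/p`, then for every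
`x ∈ L¹(μ) ∩ L²(μ)`,
`Σ a_n² ⟨x,e_n⟩² ≤ (Σ a_n^p ‖e_n‖_∞²)^{2/p} ‖x‖₁^{4/p} ‖x‖₂^{4/q}`,
where the right-hand side may equal `+∞`. -/
theorem stmt_15 {X : Type*} [MeasurableSpace X] (μ : Measure X)
    (e : ℕ → X → ℝ)
    (he2 : ∀ n, MemLp (e n) 2 μ)
    (heInf : ∀ n, MemLp (e n) ⊤ μ)
    (hortho : ∀ n k : ℕ, ∫ ω, e n ω * e k ω ∂μ = if n = k then (1 : ℝ) else 0)
    (a : ℕ → ℝ) (ha : ∀ n, 0 ≤ a n)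
    (p q : ℝ) (hp : 2 < p) (hq : 1 / q = 1 / 2 - 1 / p)
    (x : X → ℝ) (hx1 : MemLp x 1 μ) (hx2 : MemLp x 2 μ) :
    (∑' n : ℕ, ENNReal.ofReal (a n ^ 2 * (∫ ω, x ω * e n ω ∂μ) ^ 2))
      ≤ (∑' n : ℕ, ENNReal.ofReal (a n ^ p) * (eLpNorm (e n) ⊤ μ) ^ 2) ^ (2 / p)
          * (eLpNorm x 1 μ) ^ (4 / p) * (eLpNorm x 2 μ) ^ (4 / q) :=
  stmt_15_general μ e he2 hortho a ha p q hp hq x hx2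
end

section
/- Let (M_n)_{n∈ℕ} be a square-integrable martingale with respect to a filtration (G_n)_{n∈ℕ} on a probability space, and suppose there exists C > 0 such that E[M_n²] ≤ C·n for every n ≥ 1. Then M_n / n → 0 almost surely as n → ∞. -/
/-!
`M_n²` is a submartingale (conditional Jensen), so Doob's maximal inequality bounds the
probability that `max_{j ≤ (k+2)²} |M_j| ≥ δ (k+1)²` by `C (k+2)² / (δ² (k+1)⁴)`, which is
summable in `k`. By Borel–Cantelli, almost surely `|M_n| < δ (k+1)² ≤ δ n` for all large `k`
and all `n` in the block `[(k+1)², (k+2)²]`; taking `δ = 1/(m+1)` for every `m` gives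
`M_n / n → 0`.
-/

open MeasureTheory Filter Topology

theorem summable_add_two_sq_div_add_one_pow_four :
    Summable fun k : ℕ => ((k : ℝ) + 2) ^ 2 / ((k : ℝ) + 1) ^ 4 := by
  have hsum : Summable fun k : ℕ => 4 * (1 / ((k + 1 : ℕ) : ℝ) ^ 2) :=
    ((summable_nat_add_iff 1).2 (Real.summable_one_div_nat_pow.2 one_lt_two)).mul_left 4
  refine hsum.of_nonneg_of_le (fun k => by positivity) fun k => ?_
  rw [div_le_iff₀ (by positivity)]
  push_cast
  field_simp
  nlinarith [k.cast_nonneg (α := ℝ)]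

theorem tendsto_div_of_abs_lt_sq_blocks {x : ℕ → ℝ}
    (hx : ∀ m : ℕ, ∀ᶠ k : ℕ in atTop, ∀ j ≤ (k + 2) ^ 2,
      |x j| < (m + 1 : ℝ)⁻¹ * ((k : ℝ) + 1) ^ 2) :
    Tendsto (fun n => x n / n) atTop (𝓝 0) := by
  rw [Metric.tendsto_atTop]
  intro ε hε
  obtain ⟨m, hm⟩ := exists_nat_one_div_lt hε
  obtain ⟨K, hK⟩ := eventually_atTop.1 (hx m)
  refine ⟨(K + 1) ^ 2, fun n hn => ?_⟩
  -- `n` lies in the block `[(k + 1)², (k + 2)²)` where `k + 1 = ⌊√n⌋`.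
  have hK_sqrt : K + 1 ≤ n.sqrt := Nat.le_sqrt'.2 hn
  obtain ⟨k, hk⟩ : ∃ k, n.sqrt = k + 1 := ⟨n.sqrt - 1, by omega⟩
  have hlow : (k + 1) ^ 2 ≤ n := hk ▸ n.sqrt_le'
  have hhigh : n ≤ (k + 2) ^ 2 := (hk ▸ n.lt_succ_sqrt').le
  have hn_pos : (0 : ℝ) < n := by exact_mod_cast (Nat.one_le_pow _ _ k.succ_pos).trans hlow
  have hlow' : ((k : ℝ) + 1) ^ 2 ≤ n := by exact_mod_cast hlow
  rw [Real.dist_eq, sub_zero, abs_div, Nat.abs_cast, div_lt_iff₀ hn_pos]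
  calc |x n| < (m + 1 : ℝ)⁻¹ * ((k : ℝ) + 1) ^ 2 := hK k (by omega) n hhigh
    _ ≤ (m + 1 : ℝ)⁻¹ * n := by gcongr
    _ < ε * n := by
      gcongr
      simpa using hm

namespace MeasureTheory.Martingale

section Preorder

variable {Ω ι : Type*} {m0 : MeasurableSpace Ω} {μ : Measure Ω} [IsFiniteMeasure μ]
  [Preorder ι] {𝒢 : Filtration ι m0} {M : ι → Ω → ℝ}

theorem submartingale_comp (hM : Martingale M 𝒢 μ) {φ : ℝ → ℝ}
    (hφ : ConvexOn ℝ Set.univ φ) (hφ_cont : Continuous φ)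
    (hφ_int : ∀ i, Integrable (φ ∘ M i) μ) : Submartingale (fun i => φ ∘ M i) 𝒢 μ := by
  refine ⟨fun i => hφ_cont.comp_stronglyMeasurable (hM.stronglyAdapted i), fun i j hij => ?_,
    hφ_int⟩
  filter_upwards [hM.condExp_ae_eq hij, hφ.map_condExp_le_univ (𝒢.le i)
    hφ_cont.lowerSemicontinuous (hM.integrable j) (hφ_int j)] with ω hM_ω hJensen
  simpa [hM_ω] using hJensen

theorem submartingale_sq (hM : Martingale M 𝒢 μ) (hsq : ∀ i, MemLp (M i) 2 μ) :
    Submartingale (fun i ω => M i ω ^ 2) 𝒢 μ :=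
  hM.submartingale_comp even_two.convexOn_pow (continuous_pow 2) fun i => (hsq i).integrable_sq

end Preorder

variable {Ω : Type*} {m0 : MeasurableSpace Ω} {μ : Measure Ω} [IsFiniteMeasure μ]
  {𝒢 : Filtration ℕ m0} {M : ℕ → Ω → ℝ}

theorem maximal_ineq_sq (hM : Martingale M 𝒢 μ) (hsq : ∀ n, MemLp (M n) 2 μ)
    {t : ℝ} (ht : 0 < t) (N : ℕ) :
    μ {ω | ∃ j ≤ N, t ≤ |M j ω|} ≤ ENNReal.ofReal ((∫ ω, M N ω ^ 2 ∂μ) / t ^ 2) := by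
  have hset : {ω | ∃ j ≤ N, t ≤ |M j ω|} = {ω | ((t ^ 2).toNNReal : ℝ) ≤
      (Finset.range (N + 1)).sup' Finset.nonempty_range_add_one fun j => M j ω ^ 2} := by
    ext ω
    simp only [Set.mem_ofPred_eq, Real.coe_toNNReal _ (sq_nonneg t), Finset.le_sup'_iff,
      Finset.mem_range, Nat.lt_succ_iff, sq_le_sq, abs_of_pos ht]
  have hdoob := maximal_ineq (hM.submartingale_sq hsq) (fun n ω => sq_nonneg (M n ω))
    (ε := (t ^ 2).toNNReal) N
  rw [← hset] at hdoob
  rw [ENNReal.ofReal_div_of_pos (by positivity), ENNReal.le_div_iff_mul_le (by simp [ht.ne'])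
    (by simp), mul_comm]
  calc ENNReal.ofReal (t ^ 2) * μ {ω | ∃ j ≤ N, t ≤ |M j ω|}
      ≤ ENNReal.ofReal (∫ ω in {ω | ∃ j ≤ N, t ≤ |M j ω|}, M N ω ^ 2 ∂μ) := hdoob
    _ ≤ ENNReal.ofReal (∫ ω, M N ω ^ 2 ∂μ) := ENNReal.ofReal_le_ofReal <|
        setIntegral_le_integral (hsq N).integrable_sq (.of_forall fun ω => sq_nonneg _)

theorem ae_eventually_abs_lt (hM : Martingale M 𝒢 μ) (hsq : ∀ n, MemLp (M n) 2 μ) {C : ℝ}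
    (hbound : ∀ n : ℕ, 1 ≤ n → ∫ ω, M n ω ^ 2 ∂μ ≤ C * n) {δ : ℝ} (hδ : 0 < δ) :
    ∀ᵐ ω ∂μ, ∀ᶠ k : ℕ in atTop, ∀ j ≤ (k + 2) ^ 2, |M j ω| < δ * ((k : ℝ) + 1) ^ 2 := by
  have hμ : ∀ k : ℕ, μ {ω | ∃ j ≤ (k + 2) ^ 2, δ * ((k : ℝ) + 1) ^ 2 ≤ |M j ω|} ≤
      ENNReal.ofReal (C / δ ^ 2 * (((k : ℝ) + 2) ^ 2 / ((k : ℝ) + 1) ^ 4)) := by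
    intro k
    refine (hM.maximal_ineq_sq hsq (by positivity) _).trans (ENNReal.ofReal_le_ofReal ?_)
    calc (∫ ω, M ((k + 2) ^ 2) ω ^ 2 ∂μ) / (δ * ((k : ℝ) + 1) ^ 2) ^ 2
        ≤ C * (((k + 2) ^ 2 : ℕ) : ℝ) / (δ * ((k : ℝ) + 1) ^ 2) ^ 2 := by
          gcongr
          exact hbound _ (Nat.one_le_pow _ _ (by omega))
      _ = C / δ ^ 2 * (((k : ℝ) + 2) ^ 2 / ((k : ℝ) + 1) ^ 4) := by
          push_cast
          field_simp
  have hsum := (summable_add_two_sq_div_add_one_pow_four.mul_left (C / δ ^ 2)).tsum_ofReal_ne_top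
  filter_upwards [ae_eventually_notMem (ne_top_of_le_ne_top hsum (ENNReal.tsum_le_tsum hμ))]
    with ω hω
  simpa only [Set.mem_ofPred_eq, not_exists, not_and, not_le] using hω

end MeasureTheory.Martingale

theorem stmt_16_general {Ω : Type*} {m0 : MeasurableSpace Ω} {μ : Measure Ω}
    [IsProbabilityMeasure μ]
    (𝒢 : Filtration ℕ m0) (M : ℕ → Ω → ℝ)
    (hM : Martingale M 𝒢 μ)
    (hsq : ∀ n, MemLp (M n) 2 μ)
    (C : ℝ)
    (hbound : ∀ n : ℕ, 1 ≤ n → ∫ ω, (M n ω) ^ 2 ∂μ ≤ C * n) :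
    ∀ᵐ ω ∂μ, Tendsto (fun n : ℕ => M n ω / n) atTop (nhds 0) := by
  have hblocks : ∀ m : ℕ, ∀ᵐ ω ∂μ, ∀ᶠ k : ℕ in atTop, ∀ j ≤ (k + 2) ^ 2,
      |M j ω| < (m + 1 : ℝ)⁻¹ * ((k : ℝ) + 1) ^ 2 :=
    fun m => hM.ae_eventually_abs_lt hsq hbound (by positivity)
  filter_upwards [ae_all_iff.2 hblocks] with ω hω
  exact tendsto_div_of_abs_lt_sq_blocks hω

/-- a strong law of large numbers for square-integrable
martingales: if `(M_n)` is an `L²` martingale with `E[M_n²] ≤ C n` for all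
`n ≥ 1`, then `M_n / n → 0` almost surely. -/
theorem stmt_16 {Ω : Type*} {m0 : MeasurableSpace Ω} {μ : Measure Ω}
    [IsProbabilityMeasure μ]
    (𝒢 : Filtration ℕ m0) (M : ℕ → Ω → ℝ)
    (hM : Martingale M 𝒢 μ)
    (hsq : ∀ n, MemLp (M n) 2 μ)
    (C : ℝ) (hC : 0 < C)
    (hbound : ∀ n : ℕ, 1 ≤ n → ∫ ω, (M n ω) ^ 2 ∂μ ≤ C * n) :
    ∀ᵐ ω ∂μ, Tendsto (fun n : ℕ => M n ω / n) atTop (nhds 0) :=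
  stmt_16_general 𝒢 M hM hsq C hbound
end
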